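/- arXiv:1801.02089 — 6 statements merged into one kernel-verified Lean document; each statement's English description precedes it below -/
import Mathlib

section
/- Let S ⊆ 𝕋ⁿ be a tropically convex set. Then S is a projected tropical Metzler spectrahedron if and only if its homogenization S^h ⊆ 𝕋^{1+n} is a projected tropical Metzler spectrahedron. -/
open Finset

/-- The tropical semifield `𝕋 = ℝ ∪ {-∞}`, modeled as `WithBot ℝ`
(with `⊔` as tropical addition and `+` as tropical multiplication). -/
abbrev Trop := WithBot ℝ

/-- A set `X ⊆ 𝕋ⁿ` is tropically convex if it is stable under tropical
convex combinations. -/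
def TropicallyConvex {n : ℕ} (X : Set (Fin n → Trop)) : Prop :=
  ∀ x ∈ X, ∀ y ∈ X, ∀ l m : Trop, l ⊔ m = 0 →
    (fun i => (l + x i) ⊔ (m + y i)) ∈ X

/-- The tropical convex hull of `X ⊆ 𝕋ⁿ`. -/
def tconv {n : ℕ} (X : Set (Fin n → Trop)) : Set (Fin n → Trop) :=
  ⋂₀ {Y | TropicallyConvex Y ∧ X ⊆ Y}

/-- A basic semilinear set in `ℝ^d`: finitely many strict rational-linear
inequalities and rational-linear equalities (with real right-hand sides). -/
def BasicSemilinear {d : ℕ} (S : Set (Fin d → ℝ)) : Prop :=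
  ∃ (p q : ℕ) (A : Fin p → Fin d → ℚ) (b : Fin p → ℝ)
    (C : Fin q → Fin d → ℚ) (c : Fin q → ℝ),
    S = {x | (∀ i, ∑ j, (A i j : ℝ) * x j > b i) ∧ (∀ i, ∑ j, (C i j : ℝ) * x j = c i)}

/-- A semilinear set is a finite union of basic semilinear sets. -/
def Semilinear {d : ℕ} (S : Set (Fin d → ℝ)) : Prop :=
  ∃ (N : ℕ) (f : Fin N → Set (Fin d → ℝ)),
    (∀ i, BasicSemilinear (f i)) ∧ S = ⋃ i, f i

/-- The stratum of `Y ⊆ 𝕋^d` associated with `K ⊆ [d]`, as a subset of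
`ℝ^{|K|}` (the coordinates in `K` being enumerated in increasing order). -/
def stratum {d : ℕ} (Y : Set (Fin d → Trop)) (K : Finset (Fin d)) :
    Set (Fin K.card → ℝ) :=
  {z | ∃ y ∈ Y, (∀ k, y k ≠ ⊥ ↔ k ∈ K) ∧
        ∀ j : Fin K.card, y (K.orderIsoOfFin rfl j).1 = (z j : Trop)}

/-- A symmetric tropical Metzler matrix of size `m`, encoded by the data
`(D⁺, D⁻, N)` of the moduli of the positive and negative diagonal entries
and of the (tropically negative or `-∞`) off-diagonal entries. -/
structure MetzlerData (m : ℕ) where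
  Dp : Fin m → Trop
  Dm : Fin m → Trop
  offdiag : Fin m → Fin m → Trop
  diag_sign : ∀ i, Dp i = ⊥ ∨ Dm i = ⊥
  offdiag_symm : ∀ i j, offdiag i j = offdiag j i
  offdiag_diag : ∀ i, offdiag i i = ⊥

/-- The affine tropical polynomial `c ⊔ max_k (a_k + x_k)`. -/
noncomputable def tropAff {n : ℕ} (c : Trop) (a : Fin n → Trop) (x : Fin n → Trop) : Trop :=
  c ⊔ Finset.univ.sup (fun k => a k + x k)

/-- The tropical Metzler spectrahedron `S(Q0 | Q 0, …, Q (n-1)) ⊆ 𝕋ⁿ`. -/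
def metzlerSpectrahedron {n m : ℕ} (Q0 : MetzlerData m) (Q : Fin n → MetzlerData m) :
    Set (Fin n → Trop) :=
  {x | (∀ i, tropAff (Q0.Dm i) (fun k => (Q k).Dm i) x ≤
          tropAff (Q0.Dp i) (fun k => (Q k).Dp i) x) ∧
       ∀ i j, i ≠ j →
         tropAff (Q0.offdiag i j) (fun k => (Q k).offdiag i j) x
           + tropAff (Q0.offdiag i j) (fun k => (Q k).offdiag i j) x
         ≤ tropAff (Q0.Dp i) (fun k => (Q k).Dp i) x
           + tropAff (Q0.Dp j) (fun k => (Q k).Dp j) x}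

/-- Projection of `𝕋^{n+n'}` onto the first `n` coordinates. -/
def projFirst (n n' : ℕ) (x : Fin (n + n') → Trop) : Fin n → Trop :=
  fun i => x (Fin.castAdd n' i)

/-- `S ⊆ 𝕋ⁿ` is a projected tropical Metzler spectrahedron. -/
def IsProjMetzlerSpectrahedron {n : ℕ} (S : Set (Fin n → Trop)) : Prop :=
  ∃ (n' m : ℕ), 1 ≤ m ∧ ∃ (Q0 : MetzlerData m) (Q : Fin (n + n') → MetzlerData m),
    S = projFirst n n' '' metzlerSpectrahedron Q0 Q

/-- The canonical embedding `ℝⁿ → 𝕋ⁿ`. -/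
def toTrop {n : ℕ} (x : Fin n → ℝ) : Fin n → Trop := fun i => (x i : Trop)

/-- The homogenization of `S ⊆ 𝕋ⁿ`, a subset of `𝕋^{1+n}`
(first coordinate `x₀`, remaining coordinates `x₀ + x i`). -/
def homog {n : ℕ} (S : Set (Fin n → Trop)) : Set (Fin (n + 1) → Trop) :=
  {z | ∃ (x0 : Trop) (x : Fin n → Trop), x ∈ S ∧
        z = Fin.cons x0 (fun i => x0 + x i)}

/-- A real tropical cone in `ℝⁿ`. -/
def RealTropCone {n : ℕ} (X : Set (Fin n → ℝ)) : Prop :=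
  ∀ x ∈ X, ∀ y ∈ X, ∀ l m : ℝ, (fun i => max (l + x i) (m + y i)) ∈ X

/-- A function `F : ℝⁿ → ℝ^m` is semilinear if its graph is semilinear. -/
def SemilinearFun {n m : ℕ} (F : (Fin n → ℝ) → Fin m → ℝ) : Prop :=
  Semilinear (Set.range fun x => Fin.append x (F x))

/-- `F : ℝⁿ → ℝⁿ` is additively homogeneous. -/
def AddHomog {n : ℕ} (F : (Fin n → ℝ) → Fin n → ℝ) : Prop :=
  ∀ (c : ℝ) (x : Fin n → ℝ), F (fun i => c + x i) = fun i => c + F x i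

/-- A piecewise description of `F : ℝⁿ → ℝ^m`: finitely many closed polyhedra
with nonempty interior covering `ℝⁿ`, on each of which `F` is affine. -/
def IsPiecewiseDescription {n m : ℕ} (F : (Fin n → ℝ) → Fin m → ℝ) (p : ℕ)
    (W : Fin p → Set (Fin n → ℝ)) (A : Fin p → Fin m → Fin n → ℝ)
    (b : Fin p → Fin m → ℝ) : Prop :=
  (∀ s, ∃ (q : ℕ) (C : Fin q → Fin n → ℝ) (d : Fin q → ℝ),
      W s = {x | ∀ i, d i ≤ ∑ j, C i j * x j}) ∧
  (∀ s, (interior (W s)).Nonempty) ∧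
  (⋃ s, W s) = Set.univ ∧
  ∀ s, ∀ x ∈ W s, ∀ k, F x k = (∑ j, A s k j * x j) + b s k

/-- The all-`-∞` symmetric tropical Metzler matrix. -/
def botMetzler (m : ℕ) : MetzlerData m :=
  ⟨fun _ => ⊥, fun _ => ⊥, fun _ _ => ⊥, fun _ => Or.inl rfl, fun _ _ => rfl, fun _ => rfl⟩

/-!
Homogenizing the pencil turns its constant matrix into the coefficient of a new variable `x₀`.
Every entry of the pencil evaluated at `(x₀, x₀ + x)` is `x₀` plus the entry at `x`, so for
finite `x₀` the constraints are those of `x`, while for `x₀ = -∞` they are vacuous. For `S ≠ ∅`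
the only point of `S^h` with `x₀ = -∞` is the all-`-∞` one; this is enforced by an arrow-shaped
block with the constraints `2 y_i ≤ y₀ + t_i` for free auxiliary variables `t_i`. Conversely `S`
is the slice `x₀ = 0` of `S^h`, cut out by a diagonal block with the constraints `x₀ ≤ 0 ≤ x₀`,
after which `x₀` is moved among the auxiliary variables.
-/

lemma Fin.comp_append {α β : Type*} {m p : ℕ} (g : α → β) (u : Fin m → α) (v : Fin p → α) :
    g ∘ Fin.append u v = Fin.append (g ∘ u) (g ∘ v) := by
  funext i
  induction i using Fin.addCases <;> simp

namespace Trop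

lemma add_finset_sup {ι : Type*} (a : Trop) (s : Finset ι) (f : ι → Trop) :
    a + s.sup f = s.sup fun i => a + f i :=
  Finset.apply_sup_eq_sup_comp (a + ·) (fun b c => (max_add_add_left a b c).symm) (WithBot.add_bot a)

lemma exists_eq_coe_add {N : ℕ} (r : ℝ) (y : Fin N → Trop) :
    ∃ x : Fin N → Trop, y = fun i => (r : Trop) + x i :=
  ⟨fun i => ((-r : ℝ) : Trop) + y i, funext fun i => by
    rw [← add_assoc, ← WithBot.coe_add, add_neg_cancel, WithBot.coe_zero, zero_add]⟩

end Trop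

section TropAff

variable {N N' : ℕ}

lemma tropAff_le_iff {c d : Trop} {a x : Fin N → Trop} :
    tropAff c a x ≤ d ↔ c ≤ d ∧ ∀ k, a k + x k ≤ d := by
  simp [tropAff]

lemma tropAff_of_forall_eq_bot (c : Trop) {a : Fin N → Trop} (x : Fin N → Trop) (h : ∀ k, a k = ⊥) :
    tropAff c a x = c := by
  simp [tropAff, h]

@[simp] lemma tropAff_bot_coeff (c : Trop) (x : Fin N → Trop) : tropAff c (fun _ => ⊥) x = c :=
  tropAff_of_forall_eq_bot c x fun _ => rfl

lemma tropAff_indicator (k₀ : Fin N) (x : Fin N → Trop) :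
    tropAff ⊥ (fun k => if k = k₀ then 0 else ⊥) x = x k₀ :=
  eq_of_forall_ge_iff fun d => by
    simp only [tropAff_le_iff, bot_le, true_and]
    exact ⟨fun h => by simpa using h k₀, fun h k => by split_ifs <;> simp_all⟩

lemma add_tropAff (x₀ c : Trop) (a x : Fin N → Trop) :
    x₀ + tropAff c a x = tropAff (x₀ + c) a fun k => x₀ + x k := by
  simp only [tropAff, ← max_add_add_left, Trop.add_finset_sup, add_left_comm x₀]

lemma tropAff_append (c : Trop) (a x : Fin N → Trop) (b y : Fin N' → Trop) :
    tropAff c (Fin.append a b) (Fin.append x y) = tropAff (tropAff c a x) b y :=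
  eq_of_forall_ge_iff fun d => by simp [tropAff_le_iff, Fin.forall_fin_add, and_assoc]

lemma tropAff_cons (c a₀ x₀ : Trop) (a x : Fin N → Trop) :
    tropAff c (Fin.cons a₀ a) (Fin.cons x₀ x) = tropAff (c ⊔ (a₀ + x₀)) a x :=
  eq_of_forall_ge_iff fun d => by simp [tropAff_le_iff, Fin.forall_fin_succ, and_assoc]

lemma tropAff_comp_equiv (c : Trop) (a : Fin N' → Trop) (x : Fin N → Trop) (e : Fin N ≃ Fin N') :
    tropAff c (fun k => a (e k)) x = tropAff c a fun k => x (e.symm k) :=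
  eq_of_forall_ge_iff fun d => by
    rw [tropAff_le_iff, tropAff_le_iff, e.forall_congr_left]
    simp

end TropAff

namespace MetzlerData

variable {m p : ℕ}

def directSum (A : MetzlerData m) (B : MetzlerData p) : MetzlerData (m + p) where
  Dp := Fin.append A.Dp B.Dp
  Dm := Fin.append A.Dm B.Dm
  offdiag := Fin.append (fun r => Fin.append (A.offdiag r) fun _ => ⊥)
    fun r => Fin.append (fun _ => ⊥) (B.offdiag r)
  diag_sign := Fin.addCases (by simpa using A.diag_sign) (by simpa using B.diag_sign)
  offdiag_symm r s := by
    induction r using Fin.addCases <;> induction s using Fin.addCases <;>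
      simp [A.offdiag_symm, B.offdiag_symm]
  offdiag_diag r := by
    induction r using Fin.addCases <;> simp [A.offdiag_diag, B.offdiag_diag]

variable (A : MetzlerData m) (B : MetzlerData p) (r r' : Fin m) (s s' : Fin p)

@[simp] lemma directSum_Dp_castAdd : (A.directSum B).Dp (Fin.castAdd p r) = A.Dp r := by
  simp [directSum]

@[simp] lemma directSum_Dp_natAdd : (A.directSum B).Dp (Fin.natAdd m s) = B.Dp s := by
  simp [directSum]

@[simp] lemma directSum_Dm_castAdd : (A.directSum B).Dm (Fin.castAdd p r) = A.Dm r := by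
  simp [directSum]

@[simp] lemma directSum_Dm_natAdd : (A.directSum B).Dm (Fin.natAdd m s) = B.Dm s := by
  simp [directSum]

@[simp] lemma directSum_offdiag_castAdd_castAdd :
    (A.directSum B).offdiag (Fin.castAdd p r) (Fin.castAdd p r') = A.offdiag r r' := by
  simp [directSum]

@[simp] lemma directSum_offdiag_castAdd_natAdd :
    (A.directSum B).offdiag (Fin.castAdd p r) (Fin.natAdd m s) = ⊥ := by
  simp [directSum]

@[simp] lemma directSum_offdiag_natAdd_castAdd :
    (A.directSum B).offdiag (Fin.natAdd m s) (Fin.castAdd p r) = ⊥ := by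
  simp [directSum]

@[simp] lemma directSum_offdiag_natAdd_natAdd :
    (A.directSum B).offdiag (Fin.natAdd m s) (Fin.natAdd m s') = B.offdiag s s' := by
  simp [directSum]

end MetzlerData

section Spectrahedron

variable {N N' m : ℕ} {Q₀ R₀ : MetzlerData m} {Q : Fin N → MetzlerData m}
  {R : Fin N' → MetzlerData m} {x : Fin N → Trop} {y : Fin N' → Trop}

lemma mem_metzlerSpectrahedron_directSum {p : ℕ} {B₀ : MetzlerData p} {B : Fin N → MetzlerData p} :
    x ∈ metzlerSpectrahedron (Q₀.directSum B₀) (fun k => (Q k).directSum (B k)) ↔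
      x ∈ metzlerSpectrahedron Q₀ Q ∧ x ∈ metzlerSpectrahedron B₀ B := by
  simp only [metzlerSpectrahedron, Set.mem_ofPred_eq, Fin.forall_fin_add, ne_eq, Fin.castAdd_inj,
    Fin.natAdd_inj, MetzlerData.directSum_Dm_castAdd, MetzlerData.directSum_Dp_castAdd,
    MetzlerData.directSum_Dm_natAdd, MetzlerData.directSum_Dp_natAdd,
    MetzlerData.directSum_offdiag_castAdd_castAdd, MetzlerData.directSum_offdiag_castAdd_natAdd,
    MetzlerData.directSum_offdiag_natAdd_castAdd, MetzlerData.directSum_offdiag_natAdd_natAdd,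
    tropAff_bot_coeff, WithBot.add_bot, bot_le, implies_true, and_true, true_and]
  exact and_and_and_comm

lemma mem_metzlerSpectrahedron_iff_of_eval_eq
    (hDp : ∀ i, tropAff (R₀.Dp i) (fun k => (R k).Dp i) y =
      tropAff (Q₀.Dp i) (fun k => (Q k).Dp i) x)
    (hDm : ∀ i, tropAff (R₀.Dm i) (fun k => (R k).Dm i) y =
      tropAff (Q₀.Dm i) (fun k => (Q k).Dm i) x)
    (hoff : ∀ i j, tropAff (R₀.offdiag i j) (fun k => (R k).offdiag i j) y =
      tropAff (Q₀.offdiag i j) (fun k => (Q k).offdiag i j) x) :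
    y ∈ metzlerSpectrahedron R₀ R ↔ x ∈ metzlerSpectrahedron Q₀ Q := by
  simp only [metzlerSpectrahedron, Set.mem_ofPred_eq, hDp, hDm, hoff]

lemma mem_metzlerSpectrahedron_iff_of_eval_eq_add (x₀ : Trop)
    (hDp : ∀ i, tropAff (R₀.Dp i) (fun k => (R k).Dp i) y =
      x₀ + tropAff (Q₀.Dp i) (fun k => (Q k).Dp i) x)
    (hDm : ∀ i, tropAff (R₀.Dm i) (fun k => (R k).Dm i) y =
      x₀ + tropAff (Q₀.Dm i) (fun k => (Q k).Dm i) x)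
    (hoff : ∀ i j, tropAff (R₀.offdiag i j) (fun k => (R k).offdiag i j) y =
      x₀ + tropAff (Q₀.offdiag i j) (fun k => (Q k).offdiag i j) x) :
    y ∈ metzlerSpectrahedron R₀ R ↔ x₀ = ⊥ ∨ x ∈ metzlerSpectrahedron Q₀ Q := by
  simp only [metzlerSpectrahedron, Set.mem_ofPred_eq, hDp, hDm, hoff]
  cases x₀ using WithBot.recBotCoe with
  | bot => simp
  | coe r =>
    simp only [WithBot.coe_ne_bot, false_or, WithBot.add_le_add_iff_left WithBot.coe_ne_bot,
      add_add_add_comm (r : Trop), ← WithBot.coe_add]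

lemma mem_metzlerSpectrahedron_comp_equiv {Q : Fin N' → MetzlerData m} (e : Fin N ≃ Fin N') :
    x ∈ metzlerSpectrahedron Q₀ (fun k => Q (e k)) ↔
      (fun k => x (e.symm k)) ∈ metzlerSpectrahedron Q₀ Q :=
  mem_metzlerSpectrahedron_iff_of_eval_eq
    (fun i => tropAff_comp_equiv _ (fun k => (Q k).Dp i) _ e)
    (fun i => tropAff_comp_equiv _ (fun k => (Q k).Dm i) _ e)
    fun i j => tropAff_comp_equiv _ (fun k => (Q k).offdiag i j) _ e

end Spectrahedron

/-- Evaluated at `z`, this pencil (with constant term `-∞`) is the arrow matrix with diagonal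
`(z (d r))_r` and with `z (o i)` in the positions `(0, i + 1)` and `(i + 1, 0)`. -/
def arrowMetzler {N p : ℕ} (d : Fin (p + 1) → Fin N) (o : Fin p → Fin N) (k : Fin N) :
    MetzlerData (p + 1) where
  Dp r := if k = d r then 0 else ⊥
  Dm _ := ⊥
  offdiag := Fin.cases (Fin.cases ⊥ fun j => if k = o j then 0 else ⊥)
    fun i => Fin.cases (if k = o i then 0 else ⊥) fun _ => ⊥
  diag_sign _ := Or.inr rfl
  offdiag_symm r s := by cases r using Fin.cases <;> cases s using Fin.cases <;> simp
  offdiag_diag r := by cases r using Fin.cases <;> simp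

lemma mem_metzlerSpectrahedron_arrow {N p : ℕ} {d : Fin (p + 1) → Fin N} {o : Fin p → Fin N}
    {z : Fin N → Trop} :
    z ∈ metzlerSpectrahedron (botMetzler (p + 1)) (arrowMetzler d o) ↔
      ∀ i, z (o i) + z (o i) ≤ z (d 0) + z (d i.succ) := by
  simp [metzlerSpectrahedron, arrowMetzler, botMetzler, Fin.forall_fin_succ, tropAff_indicator,
    (Fin.succ_ne_zero _).symm, add_comm (z (d 0))]

def pinZeroConst : MetzlerData 2 where
  Dp := ![0, ⊥]
  Dm := ![⊥, 0]
  offdiag _ _ := ⊥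
  diag_sign := by simp [Fin.forall_fin_two]
  offdiag_symm _ _ := rfl
  offdiag_diag _ := rfl

def pinZeroCoeff {N : ℕ} (k₀ k : Fin N) : MetzlerData 2 where
  Dp := ![⊥, if k = k₀ then 0 else ⊥]
  Dm := ![if k = k₀ then 0 else ⊥, ⊥]
  offdiag _ _ := ⊥
  diag_sign := by simp [Fin.forall_fin_two]
  offdiag_symm _ _ := rfl
  offdiag_diag _ := rfl

lemma mem_metzlerSpectrahedron_pinZero {N : ℕ} {k₀ : Fin N} {z : Fin N → Trop} :
    z ∈ metzlerSpectrahedron pinZeroConst (pinZeroCoeff k₀) ↔ z k₀ = 0 := by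
  simp only [metzlerSpectrahedron, Set.mem_ofPred_eq, pinZeroConst, pinZeroCoeff, Fin.forall_fin_two,
    Fin.isValue, Matrix.cons_val_zero, Matrix.cons_val_one, Matrix.cons_val_fin_one, ne_eq,
    tropAff_indicator, tropAff_bot_coeff, WithBot.add_bot, bot_le, implies_true, and_true]
  exact le_antisymm_iff.symm

/-- Its spectrahedron is cut out by the constraint `0 ≤ -∞`. -/
def emptyMetzler : MetzlerData 1 where
  Dp _ := ⊥
  Dm _ := 0
  offdiag _ _ := ⊥
  diag_sign _ := Or.inl rfl
  offdiag_symm _ _ := rfl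
  offdiag_diag _ := rfl

lemma isProjMetzlerSpectrahedron_empty {n : ℕ} :
    IsProjMetzlerSpectrahedron (∅ : Set (Fin n → Trop)) :=
  ⟨0, 1, le_rfl, emptyMetzler, fun _ => botMetzler 1, by
    simp [metzlerSpectrahedron, emptyMetzler, botMetzler]⟩

lemma projFirst_append {n n' : ℕ} (x : Fin n → Trop) (u : Fin n' → Trop) :
    projFirst n n' (Fin.append x u) = x :=
  funext (Fin.append_left x u)

lemma homog_empty {n : ℕ} : homog (∅ : Set (Fin n → Trop)) = ∅ := by
  simp [homog]

lemma cons_zero_mem_homog_iff {n : ℕ} {S : Set (Fin n → Trop)} {x : Fin n → Trop} :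
    Fin.cons 0 x ∈ homog S ↔ x ∈ S := by
  refine ⟨fun ⟨x₀, y, hy, h⟩ => ?_, fun h => ⟨0, x, h, by simp⟩⟩
  obtain ⟨rfl, rfl⟩ := Fin.cons_inj.1 h
  simpa using hy

section Homogenization

variable {n n' m : ℕ} (Q₀ : MetzlerData m) (Q : Fin (n + n') → MetzlerData m)

/-- The homogenized pencil in the variables `(x₀, x, u, t)`, where `x₀` carries `Q₀` and the `p`
variables `t` do not occur. -/
def homogPencil (p : ℕ) : Fin ((n + 1) + (n' + p)) → MetzlerData m :=
  Fin.append (Fin.cons Q₀ fun i => Q (Fin.castAdd n' i))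
    (Fin.append (fun j => Q (Fin.natAdd n j)) fun _ => botMetzler m)

lemma tropAff_homogPencil {p : ℕ} (f : MetzlerData m → Trop) (hf : f (botMetzler m) = ⊥)
    (x₀ : Trop) (x : Fin n → Trop) (u : Fin n' → Trop) (t : Fin p → Trop) :
    tropAff (f (botMetzler m)) (fun k => f (homogPencil Q₀ Q p k))
        (Fin.append (Fin.cons x₀ fun i => x₀ + x i) (Fin.append (fun j => x₀ + u j) t)) =
      x₀ + tropAff (f Q₀) (fun k => f (Q k)) (Fin.append x u) := by
  change tropAff _ (f ∘ homogPencil Q₀ Q p) _ = x₀ + tropAff _ (f ∘ Q) _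
  rw [homogPencil, Fin.comp_append, Fin.comp_append, Fin.comp_cons, tropAff_append,
    tropAff_append, tropAff_cons, tropAff_of_forall_eq_bot (a := f ∘ fun _ => botMetzler m) _ t
      fun _ => hf, hf, bot_sup_eq, ← Fin.append_castAdd_natAdd (f := f ∘ Q), tropAff_append,
    add_tropAff, add_tropAff, add_comm]
  rfl

lemma homogPoint_mem_iff {p : ℕ} {x₀ : Trop} {x : Fin n → Trop} {u : Fin n' → Trop}
    {t : Fin p → Trop} :
    Fin.append (Fin.cons x₀ fun i => x₀ + x i) (Fin.append (fun j => x₀ + u j) t) ∈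
        metzlerSpectrahedron (botMetzler m) (homogPencil Q₀ Q p) ↔
      x₀ = ⊥ ∨ Fin.append x u ∈ metzlerSpectrahedron Q₀ Q :=
  mem_metzlerSpectrahedron_iff_of_eval_eq_add x₀
    (fun i => tropAff_homogPencil Q₀ Q (·.Dp i) rfl x₀ x u t)
    (fun i => tropAff_homogPencil Q₀ Q (·.Dm i) rfl x₀ x u t)
    (fun i j => tropAff_homogPencil Q₀ Q (·.offdiag i j) rfl x₀ x u t)

/-- In the variables `(y₀, y, w, t)`, the homogenized pencil together with the arrow block
`2 y_i ≤ y₀ + t_i`. -/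
def homogLift : Fin ((n + 1) + (n' + n)) → MetzlerData (m + (n + 1)) := fun k =>
  (homogPencil Q₀ Q n k).directSum
    (arrowMetzler (Fin.cons (Fin.castAdd (n' + n) 0) fun i => Fin.natAdd (n + 1) (Fin.natAdd n' i))
      (fun i => Fin.castAdd (n' + n) i.succ) k)

lemma mem_homogLift_iff {w₀ : Trop} {y : Fin n → Trop} {v : Fin n' → Trop} {t : Fin n → Trop} :
    Fin.append (Fin.cons w₀ y) (Fin.append v t) ∈
        metzlerSpectrahedron ((botMetzler m).directSum (botMetzler (n + 1))) (homogLift Q₀ Q) ↔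
      Fin.append (Fin.cons w₀ y) (Fin.append v t) ∈
          metzlerSpectrahedron (botMetzler m) (homogPencil Q₀ Q n) ∧
        ∀ i, y i + y i ≤ w₀ + t i := by
  unfold homogLift
  rw [mem_metzlerSpectrahedron_directSum, mem_metzlerSpectrahedron_arrow]
  simp

lemma homog_image_subset :
    homog (projFirst n n' '' metzlerSpectrahedron Q₀ Q) ⊆ projFirst (n + 1) (n' + n) ''
      metzlerSpectrahedron ((botMetzler m).directSum (botMetzler (n + 1))) (homogLift Q₀ Q) := by
  rintro _ ⟨x₀, _, ⟨xu, hxu, rfl⟩, rfl⟩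
  set x := projFirst n n' xu
  set u : Fin n' → Trop := fun j => xu (Fin.natAdd n j)
  have hxu' : Fin.append x u = xu := Fin.append_castAdd_natAdd
  refine ⟨Fin.append (Fin.cons x₀ fun i => x₀ + x i)
      (Fin.append (fun j => x₀ + u j) fun i => x₀ + (x i + x i)), ?_, projFirst_append _ _⟩
  refine (mem_homogLift_iff Q₀ Q).2 ⟨(homogPoint_mem_iff Q₀ Q).2 (Or.inr (hxu' ▸ hxu)), fun i => ?_⟩
  rw [add_add_add_comm, add_assoc]

lemma image_subset_homog (hne : (metzlerSpectrahedron Q₀ Q).Nonempty) :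
    projFirst (n + 1) (n' + n) ''
        metzlerSpectrahedron ((botMetzler m).directSum (botMetzler (n + 1))) (homogLift Q₀ Q) ⊆
      homog (projFirst n n' '' metzlerSpectrahedron Q₀ Q) := by
  rintro _ ⟨w, hw, rfl⟩
  obtain ⟨a, b, rfl⟩ : ∃ a b, w = Fin.append a b := ⟨_, _, Fin.append_castAdd_natAdd.symm⟩
  obtain ⟨v, t, rfl⟩ : ∃ v t, b = Fin.append v t := ⟨_, _, Fin.append_castAdd_natAdd.symm⟩
  obtain ⟨w₀, y, rfl⟩ : ∃ w₀ y, a = Fin.cons w₀ y := ⟨_, _, (Fin.cons_self_tail a).symm⟩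
  obtain ⟨hpencil, harrow⟩ := (mem_homogLift_iff Q₀ Q).1 hw
  rw [projFirst_append]
  cases w₀ using WithBot.recBotCoe with
  | bot =>
    obtain ⟨xu, hxu⟩ := hne
    have hy : y = fun _ => ⊥ := funext fun i => by simpa using harrow i
    exact ⟨⊥, _, ⟨xu, hxu, rfl⟩, by simp [hy]⟩
  | coe r =>
    obtain ⟨x, rfl⟩ := Trop.exists_eq_coe_add r y
    obtain ⟨u, rfl⟩ := Trop.exists_eq_coe_add r v
    rw [homogPoint_mem_iff] at hpencil
    exact ⟨r, x, ⟨_, hpencil.resolve_left WithBot.coe_ne_bot, projFirst_append x u⟩, rfl⟩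

lemma homog_image_eq (hne : (metzlerSpectrahedron Q₀ Q).Nonempty) :
    homog (projFirst n n' '' metzlerSpectrahedron Q₀ Q) = projFirst (n + 1) (n' + n) ''
      metzlerSpectrahedron ((botMetzler m).directSum (botMetzler (n + 1))) (homogLift Q₀ Q) :=
  (homog_image_subset Q₀ Q).antisymm (image_subset_homog Q₀ Q hne)

end Homogenization

lemma isProjMetzlerSpectrahedron_homog {n : ℕ} {S : Set (Fin n → Trop)}
    (hS : IsProjMetzlerSpectrahedron S) : IsProjMetzlerSpectrahedron (homog S) := by
  obtain ⟨n', m, hm, Q₀, Q, rfl⟩ := hS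
  rcases (metzlerSpectrahedron Q₀ Q).eq_empty_or_nonempty with hE | hne
  · rw [hE, Set.image_empty, homog_empty]
    exact isProjMetzlerSpectrahedron_empty
  · exact ⟨n' + n, m + (n + 1), by omega, _, _, homog_image_eq Q₀ Q hne⟩

section Dehomogenization

variable {n n' m : ℕ}

/-- The reordering of variables `(x, x₀, u) ↦ (x₀, x, u)`. -/
def dehomogEquiv (n n' : ℕ) : Fin (n + (1 + n')) ≃ Fin ((n + 1) + n') :=
  (finCongr (Nat.add_assoc n 1 n').symm).trans (Fin.cycleRange (Fin.castAdd n' (Fin.last n)))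

lemma dehomogEquiv_castAdd (i : Fin n) :
    dehomogEquiv n n' (Fin.castAdd (1 + n') i) = Fin.castAdd n' i.succ := by
  ext
  rw [dehomogEquiv, Equiv.trans_apply, Fin.coe_cycleRange_of_lt] <;> simp [Fin.lt_def]

lemma projFirst_comp_dehomogEquiv_symm (z : Fin (n + (1 + n')) → Trop) :
    projFirst (n + 1) n' (fun k => z ((dehomogEquiv n n').symm k)) =
      Fin.cons (z ((dehomogEquiv n n').symm (Fin.castAdd n' 0))) (projFirst n (1 + n') z) := by
  funext i
  cases i using Fin.cases <;> simp [projFirst, ← dehomogEquiv_castAdd]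

lemma eq_image_of_homog_eq_image {S : Set (Fin n → Trop)} {Q₀ : MetzlerData m}
    {Q : Fin ((n + 1) + n') → MetzlerData m}
    (hS : homog S = projFirst (n + 1) n' '' metzlerSpectrahedron Q₀ Q) :
    S = projFirst n (1 + n') '' metzlerSpectrahedron (Q₀.directSum pinZeroConst) fun k =>
      (Q (dehomogEquiv n n' k)).directSum
        (pinZeroCoeff ((dehomogEquiv n n').symm (Fin.castAdd n' 0)) k) := by
  ext x
  rw [← cons_zero_mem_homog_iff, hS]
  simp only [Set.mem_image, mem_metzlerSpectrahedron_directSum, mem_metzlerSpectrahedron_comp_equiv,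
    mem_metzlerSpectrahedron_pinZero]
  constructor
  · rintro ⟨z', hz', hx⟩
    have h := projFirst_comp_dehomogEquiv_symm fun k => z' (dehomogEquiv n n' k)
    simp only [Equiv.apply_symm_apply, hx, Fin.cons_inj] at h
    exact ⟨_, ⟨by simpa using hz', by simpa using h.1.symm⟩, h.2.symm⟩
  · rintro ⟨z, ⟨hz, hz₀⟩, rfl⟩
    exact ⟨_, hz, by rw [projFirst_comp_dehomogEquiv_symm, hz₀]⟩

end Dehomogenization

lemma isProjMetzlerSpectrahedron_of_homog {n : ℕ} {S : Set (Fin n → Trop)}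
    (hS : IsProjMetzlerSpectrahedron (homog S)) : IsProjMetzlerSpectrahedron S := by
  obtain ⟨n', m, hm, Q₀, Q, hQ⟩ := hS
  exact ⟨1 + n', m + 2, by omega, _, _, eq_image_of_homog_eq_image hQ⟩

theorem stmt6_general {n : ℕ} (S : Set (Fin n → Trop)) :
    IsProjMetzlerSpectrahedron S ↔ IsProjMetzlerSpectrahedron (homog S) :=
  ⟨isProjMetzlerSpectrahedron_homog, isProjMetzlerSpectrahedron_of_homog⟩

theorem stmt6 {n : ℕ} (S : Set (Fin n → Trop)) (hconv : TropicallyConvex S) :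
    IsProjMetzlerSpectrahedron S ↔ IsProjMetzlerSpectrahedron (homog S) :=
  stmt6_general S
end

section
/- If S₁, S₂ ⊆ 𝕋ⁿ are projected tropical Metzler spectrahedra, then the tropical convex hull tconv(S₁ ∪ S₂) is a projected tropical Metzler spectrahedron. -/
/-!
A projected Metzler spectrahedron is the same as a set `{x | ∃ y, (0, x, y) ∈ C}` where `C` is
cut out by a homogeneous Metzler system; such a `C` is a tropical cone, so these sets are
tropically convex. For nonempty `S₁`, `S₂` the hull `tconv (S₁ ∪ S₂)` is therefore the set of
points `(λ ⊙ x) ⊕ (μ ⊙ y)` with `x ∈ S₁`, `y ∈ S₂`, `λ ⊕ μ = 0`. Homogenizing, `(λ, λ ⊙ x)` and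
`(μ, μ ⊙ y)` range over the cones `C₁`, `C₂`, and the remaining conditions (coordinatewise
maxima, `λ, μ ≤ 0 ≤ λ ⊕ μ`, and a slack inequality excluding recession directions when
`λ = -∞`) are Metzler inequalities as well. Stacking all these systems block-diagonally
exhibits the hull as a projected Metzler spectrahedron.
-/

open Finset

namespace TropMetzler

variable {W R : Type*}

lemma add_sup_distrib (c a b : Trop) : c + (a ⊔ b) = (c + a) ⊔ (c + b) :=
  (add_right_mono (a := c)).map_sup a b

lemma add_finset_sup {ι : Type*} (c : Trop) (s : Finset ι) (f : ι → Trop) :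
    c + s.sup f = s.sup fun i => c + f i :=
  Finset.apply_sup_eq_sup_comp_of_linearOrder (c + ·) add_right_mono (WithBot.add_bot c)

lemma sup_add_sup_self (a b : Trop) : (a ⊔ b) + (a ⊔ b) = (a + a) ⊔ (b + b) :=
  Monotone.map_sup (fun _ _ h => add_le_add h h : Monotone fun x : Trop => x + x) a b

lemma univ_sup_option {α β : Type*} [Fintype α] [SemilatticeSup β] [OrderBot β]
    (f : Option α → β) : univ.sup f = f none ⊔ univ.sup (f ∘ some) := by
  refine le_antisymm (Finset.sup_le fun o _ => ?_) (sup_le (le_sup (mem_univ _))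
    (Finset.sup_le fun a _ => le_sup (f := f) (mem_univ _)))
  cases o with
  | none => exact le_sup_left
  | some a => exact le_sup_of_le_right (le_sup (f := f ∘ some) (mem_univ a))

noncomputable def tropLin [Fintype W] (a x : W → Trop) : Trop :=
  univ.sup fun w => a w + x w

/-- `none` is the homogenizing coordinate, set to the tropical unit `0`. -/
def homPt (x : W → Trop) : Option W → Trop := fun o => o.elim 0 x

lemma homPt_comp {V V' : Type*} (x : V' → Trop) (f : V → V') :
    homPt (x ∘ f) = homPt x ∘ Option.map f := by
  funext o
  cases o <;> rfl

lemma tropAff_eq_tropLin {N : ℕ} (a : Option (Fin N) → Trop) (x : Fin N → Trop) :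
    tropAff (a none) (fun k => a (some k)) x = tropLin a (homPt x) := by
  simp [tropAff, tropLin, homPt, univ_sup_option, Function.comp_def]

lemma tropLin_bot [Fintype W] (x : W → Trop) : tropLin ⊥ x = ⊥ := by
  simp [tropLin]

lemma tropLin_indicator [Fintype W] [DecidableEq W] (s : Finset W) (x : W → Trop) :
    tropLin (fun w => if w ∈ s then 0 else ⊥) x = s.sup x := by
  simp [tropLin, ite_add, Finset.sup_ite]

lemma tropLin_extend {W' : Type*} [Fintype W] [Fintype W'] {f : W → W'} (hf : f.Injective)
    (a : W → Trop) (x : W' → Trop) :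
    tropLin (Function.extend f a ⊥) x = tropLin a (x ∘ f) := by
  refine le_antisymm (Finset.sup_le fun w' _ => ?_) (Finset.sup_le fun w _ => ?_)
  · by_cases h : ∃ w, f w = w'
    · obtain ⟨w, rfl⟩ := h
      rw [hf.extend_apply]
      exact le_sup (f := fun w => a w + x (f w)) (mem_univ w)
    · simp [Function.extend_apply' _ _ _ h]
  · simpa [tropLin, hf.extend_apply] using le_sup (f := fun w' => Function.extend f a ⊥ w' + x w')
      (mem_univ (f w))

lemma tropLin_tropComb [Fintype W] (a x y : W → Trop) (l m : Trop) :
    tropLin a (fun w => (l + x w) ⊔ (m + y w)) = (l + tropLin a x) ⊔ (m + tropLin a y) := by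
  simp only [tropLin, add_finset_sup, ← Finset.sup_sup]
  congr 1
  ext w
  simp only [Pi.sup_apply, add_sup_distrib, add_left_comm]

def IsTropCone (C : Set (W → Trop)) : Prop :=
  ∀ x ∈ C, ∀ y ∈ C, ∀ l m : Trop, (fun w => (l + x w) ⊔ (m + y w)) ∈ C

lemma IsTropCone.add_const {C : Set (W → Trop)} (hC : IsTropCone C) {x : W → Trop} (hx : x ∈ C)
    (c : Trop) : (fun w => c + x w) ∈ C := by
  simpa using hC x hx x hx c ⊥

/-- The data `(D⁺, D⁻, N)` of the symmetric tropical Metzler matrices `Q⁽ʷ⁾`, `w ∈ W`, indexed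
by rows `R`; there is no constant matrix. -/
structure HMetzlerSystem (W R : Type*) where
  dp : R → W → Trop
  dm : R → W → Trop
  off : R → R → W → Trop
  sign : ∀ r w, dp r w = ⊥ ∨ dm r w = ⊥
  off_symm : ∀ r r', off r r' = off r' r

namespace HMetzlerSystem

variable {R' W' : Type*} [Fintype W]

def sol (A : HMetzlerSystem W R) : Set (W → Trop) :=
  {x | (∀ r, tropLin (A.dm r) x ≤ tropLin (A.dp r) x) ∧
    ∀ r r', r ≠ r' → tropLin (A.off r r') x + tropLin (A.off r r') x ≤
      tropLin (A.dp r) x + tropLin (A.dp r') x}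

lemma isTropCone_sol (A : HMetzlerSystem W R) : IsTropCone A.sol := by
  rintro x ⟨hx₁, hx₂⟩ y ⟨hy₁, hy₂⟩ l m
  refine ⟨fun r => ?_, fun r r' hr => ?_⟩
  · simp only [tropLin_tropComb]
    exact sup_le_sup (add_le_add_right (hx₁ r) l) (add_le_add_right (hy₁ r) m)
  · have shift (c : Trop) {p d e : Trop} (h : p + p ≤ d + e) :
        (c + p) + (c + p) ≤ (c + d) + (c + e) := by
      rw [add_add_add_comm, add_add_add_comm c d]
      exact add_le_add_right h _
    simp only [tropLin_tropComb, sup_add_sup_self]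
    exact sup_le ((shift l (hx₂ r r' hr)).trans (add_le_add le_sup_left le_sup_left))
      ((shift m (hy₂ r r' hr)).trans (add_le_add le_sup_right le_sup_right))

def inter (A : HMetzlerSystem W R) (B : HMetzlerSystem W R') : HMetzlerSystem W (R ⊕ R') where
  dp := Sum.elim A.dp B.dp
  dm := Sum.elim A.dm B.dm
  off
    | .inl r, .inl r' => A.off r r'
    | .inr r, .inr r' => B.off r r'
    | _, _ => ⊥
  sign := by rintro (r | r) w <;> simp [A.sign, B.sign]
  off_symm := by rintro (r | r) (r' | r') <;> simp [A.off_symm, B.off_symm]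

lemma sol_inter (A : HMetzlerSystem W R) (B : HMetzlerSystem W R') :
    (A.inter B).sol = A.sol ∩ B.sol := by
  ext x
  constructor
  · rintro ⟨h₁, h₂⟩
    exact ⟨⟨fun r => h₁ (.inl r), fun r r' hr => h₂ (.inl r) (.inl r') (by simpa)⟩,
      ⟨fun r => h₁ (.inr r), fun r r' hr => h₂ (.inr r) (.inr r') (by simpa)⟩⟩
  · rintro ⟨⟨hA₁, hA₂⟩, ⟨hB₁, hB₂⟩⟩
    refine ⟨fun r => ?_, fun r r' hr => ?_⟩
    · cases r
      exacts [hA₁ _, hB₁ _]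
    · rcases r with r | r <;> rcases r' with r' | r'
      · exact hA₂ r r' (by simpa using hr)
      · simp [inter, tropLin_bot]
      · simp [inter, tropLin_bot]
      · exact hB₂ r r' (by simpa using hr)

noncomputable def comap (A : HMetzlerSystem W R) (f : W → W') : HMetzlerSystem W' R where
  dp r := Function.extend f (A.dp r) ⊥
  dm r := Function.extend f (A.dm r) ⊥
  off r r' := Function.extend f (A.off r r') ⊥
  sign r w' := by
    unfold Function.extend
    split_ifs
    exacts [A.sign _ _, Or.inl rfl]
  off_symm r r' := by rw [A.off_symm]

lemma sol_comap [Fintype W'] (A : HMetzlerSystem W R) {f : W → W'} (hf : f.Injective) :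
    (A.comap f).sol = {x | x ∘ f ∈ A.sol} := by
  ext x
  simp only [sol, comap, tropLin_extend hf, Set.mem_ofPred_eq]

def ofDiag (a b : R → W → Trop) (h : ∀ r w, b r w = ⊥ ∨ a r w = ⊥) :
    HMetzlerSystem W R where
  dp := b
  dm := a
  off _ _ := ⊥
  sign := h
  off_symm _ _ := rfl

lemma sol_ofDiag (a b : R → W → Trop) (h : ∀ r w, b r w = ⊥ ∨ a r w = ⊥) :
    (ofDiag a b h).sol = {x | ∀ r, tropLin (a r) x ≤ tropLin (b r) x} := by
  ext x
  simp [sol, ofDiag, tropLin_bot]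

def ofTwo (a b c : W → Trop) : HMetzlerSystem W Bool where
  dp r := bif r then a else b
  dm _ := ⊥
  off _ _ := c
  sign _ _ := Or.inr rfl
  off_symm _ _ := rfl

lemma sol_ofTwo (a b c : W → Trop) :
    (ofTwo a b c).sol = {x | tropLin c x + tropLin c x ≤ tropLin a x + tropLin b x} := by
  ext x
  simp [sol, ofTwo, tropLin_bot, Bool.forall_bool, add_comm (tropLin b x)]

end HMetzlerSystem

def IsHMetzler [Fintype W] (C : Set (W → Trop)) : Prop :=
  ∃ (R : Type) (_ : Fintype R) (A : HMetzlerSystem W R), C = A.sol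

namespace IsHMetzler

variable [Fintype W] {C D : Set (W → Trop)}

lemma isTropCone (hC : IsHMetzler C) : IsTropCone C := by
  obtain ⟨R, _, A, rfl⟩ := hC
  exact A.isTropCone_sol

lemma inter (hC : IsHMetzler C) (hD : IsHMetzler D) : IsHMetzler (C ∩ D) := by
  obtain ⟨R, _, A, rfl⟩ := hC
  obtain ⟨R', _, B, rfl⟩ := hD
  exact ⟨R ⊕ R', inferInstance, A.inter B, (A.sol_inter B).symm⟩

lemma preimage_comp {W' : Type*} [Fintype W'] (hC : IsHMetzler C) {f : W → W'}
    (hf : f.Injective) : IsHMetzler {x : W' → Trop | x ∘ f ∈ C} := by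
  obtain ⟨R, _, A, rfl⟩ := hC
  exact ⟨R, inferInstance, A.comap f, (A.sol_comap hf).symm⟩

end IsHMetzler

lemma isHMetzler_forall_sup_le [Fintype W] [DecidableEq W] {R : Type} [Fintype R]
    (s t : R → Finset W) (h : ∀ r, Disjoint (s r) (t r)) :
    IsHMetzler {x : W → Trop | ∀ r, (s r).sup x ≤ (t r).sup x} := by
  refine ⟨R, inferInstance, .ofDiag (fun r w => if w ∈ s r then 0 else ⊥)
    (fun r w => if w ∈ t r then 0 else ⊥) fun r w => ?_, ?_⟩
  · by_cases hw : w ∈ t r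
    · simp [Finset.disjoint_right.1 (h r) hw]
    · simp [hw]
  · simp [HMetzlerSystem.sol_ofDiag, tropLin_indicator]

lemma isHMetzler_sup_add_sup_le [Fintype W] [DecidableEq W] (s t t' : Finset W) :
    IsHMetzler {x : W → Trop | s.sup x + s.sup x ≤ t.sup x + t'.sup x} :=
  ⟨Bool, inferInstance, .ofTwo (fun w => if w ∈ t then 0 else ⊥)
    (fun w => if w ∈ t' then 0 else ⊥) (fun w => if w ∈ s then 0 else ⊥),
    by simp [HMetzlerSystem.sol_ofTwo, tropLin_indicator]⟩

def projDehom {n : ℕ} {A : Type*} (C : Set (Option (Fin n ⊕ A) → Trop)) : Set (Fin n → Trop) :=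
  {x | ∃ y : A → Trop, homPt (Sum.elim x y) ∈ C}

/-- The constant term becomes the coefficient of the homogenizing variable `none`. -/
def ofMetzler {N m : ℕ} (Q0 : MetzlerData m) (Q : Fin N → MetzlerData m) :
    HMetzlerSystem (Option (Fin N)) (Fin m) where
  dp r o := o.elim (Q0.Dp r) fun k => (Q k).Dp r
  dm r o := o.elim (Q0.Dm r) fun k => (Q k).Dm r
  off r r' o := o.elim (Q0.offdiag r r') fun k => (Q k).offdiag r r'
  sign r o := by cases o; exacts [Q0.diag_sign r, (Q _).diag_sign r]
  off_symm r r' := by funext o; cases o <;> simp [MetzlerData.offdiag_symm]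

lemma metzlerSpectrahedron_eq {N m : ℕ} (Q0 : MetzlerData m) (Q : Fin N → MetzlerData m) :
    metzlerSpectrahedron Q0 Q = homPt ⁻¹' (ofMetzler Q0 Q).sol := by
  ext x
  simp only [Set.mem_preimage, HMetzlerSystem.sol, Set.mem_ofPred_eq, ← tropAff_eq_tropLin]
  rfl

namespace HMetzlerSystem

variable {N m : ℕ} (A : HMetzlerSystem (Option (Fin N)) R) (e : R ≃ Fin m)

def metzlerAt (o : Option (Fin N)) : MetzlerData m where
  Dp i := A.dp (e.symm i) o
  Dm i := A.dm (e.symm i) o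
  offdiag i j := if i = j then ⊥ else A.off (e.symm i) (e.symm j) o
  diag_sign i := A.sign _ o
  offdiag_symm i j := by
    by_cases h : i = j
    · rw [h]
    · simp [h, Ne.symm h, A.off_symm]
  offdiag_diag i := if_pos rfl

lemma sol_ofMetzler_metzlerAt :
    (ofMetzler (A.metzlerAt e none) fun k => A.metzlerAt e (some k)).sol = A.sol := by
  have hdp : ∀ i, (ofMetzler (A.metzlerAt e none) fun k => A.metzlerAt e (some k)).dp i =
      A.dp (e.symm i) := fun i => funext fun o => by cases o <;> rfl
  have hdm : ∀ i, (ofMetzler (A.metzlerAt e none) fun k => A.metzlerAt e (some k)).dm i =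
      A.dm (e.symm i) := fun i => funext fun o => by cases o <;> rfl
  have hoff : ∀ i j, i ≠ j →
      (ofMetzler (A.metzlerAt e none) fun k => A.metzlerAt e (some k)).off i j =
        A.off (e.symm i) (e.symm j) := fun i j h => funext fun o => by
    cases o <;> simp [ofMetzler, metzlerAt, h]
  ext x
  simp only [sol, Set.mem_ofPred_eq, hdp, hdm]
  constructor
  · rintro ⟨h₁, h₂⟩
    refine ⟨fun r => by simpa using h₁ (e r), fun r r' hr => ?_⟩
    simpa [hoff _ _ (e.injective.ne hr)] using h₂ (e r) (e r') (e.injective.ne hr)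
  · rintro ⟨h₁, h₂⟩
    exact ⟨fun i => h₁ _, fun i j h => by
      rw [hoff i j h]; exact h₂ _ _ (e.symm.injective.ne h)⟩

end HMetzlerSystem

lemma IsHMetzler.exists_metzlerSpectrahedron_eq {N : ℕ} {X : Set (Option (Fin N) → Trop)}
    (hX : IsHMetzler X) : ∃ m, 1 ≤ m ∧ ∃ (Q0 : MetzlerData m) (Q : Fin N → MetzlerData m),
      metzlerSpectrahedron Q0 Q = homPt ⁻¹' X := by
  obtain ⟨R, _, A, rfl⟩ := hX
  -- a trivial extra row, so that `1 ≤ m`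
  let B := A.inter (.ofDiag (R := Unit) ⊥ ⊥ fun _ _ => .inl rfl)
  have hB : B.sol = A.sol := by
    simp [B, HMetzlerSystem.sol_inter, HMetzlerSystem.sol_ofDiag]
  let e := Fintype.equivFin (R ⊕ Unit)
  refine ⟨_, Fintype.card_pos, B.metzlerAt e none, fun k => B.metzlerAt e (some k), ?_⟩
  rw [metzlerSpectrahedron_eq, B.sol_ofMetzler_metzlerAt, hB]

lemma image_projFirst_preimage_homPt {n n' : ℕ} {A : Type*} (e : Fin n ⊕ A ≃ Fin (n + n'))
    (he : ∀ i, e (.inl i) = Fin.castAdd n' i) (X : Set (Option (Fin (n + n')) → Trop)) :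
    projFirst n n' '' (homPt ⁻¹' X) = projDehom {w | w ∘ Option.map e.symm ∈ X} := by
  ext x
  simp only [projDehom, Set.mem_image, Set.mem_preimage, Set.mem_ofPred_eq, ← homPt_comp]
  constructor
  · rintro ⟨x', hx', rfl⟩
    refine ⟨x' ∘ e ∘ .inr, ?_⟩
    convert hx'
    funext k
    obtain ⟨v, rfl⟩ := e.surjective k
    rw [Function.comp_apply, Equiv.symm_apply_apply]
    cases v <;> simp [projFirst, he]
  · rintro ⟨y, hy⟩
    exact ⟨_, hy, funext fun i => by simp [projFirst, ← he]⟩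

theorem isProjMetzlerSpectrahedron_iff {n : ℕ} {S : Set (Fin n → Trop)} :
    IsProjMetzlerSpectrahedron S ↔ ∃ (A : Type) (_ : Fintype A)
      (C : Set (Option (Fin n ⊕ A) → Trop)), IsHMetzler C ∧ S = projDehom C := by
  constructor
  · rintro ⟨n', m, -, Q0, Q, rfl⟩
    refine ⟨Fin n', inferInstance, _, ?_, by
      rw [metzlerSpectrahedron_eq, image_projFirst_preimage_homPt finSumFinEquiv
        finSumFinEquiv_apply_left]⟩
    exact IsHMetzler.preimage_comp ⟨_, inferInstance, ofMetzler Q0 Q, rfl⟩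
      (Option.map_injective finSumFinEquiv.symm.injective)
  · rintro ⟨A, _, C, hC, rfl⟩
    let e := (Equiv.sumCongr (Equiv.refl (Fin n)) (Fintype.equivFin A)).trans finSumFinEquiv
    obtain ⟨m, hm, Q0, Q, hQ⟩ :=
      (hC.preimage_comp (Option.map_injective e.injective)).exists_metzlerSpectrahedron_eq
    refine ⟨Fintype.card A, m, hm, Q0, Q, ?_⟩
    rw [hQ, image_projFirst_preimage_homPt e fun i => by simp [e]]
    congr
    ext w
    simp [Function.comp_assoc, Option.map_comp_map]

section TropicalConvexity

variable {n : ℕ}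

lemma subset_tconv (X : Set (Fin n → Trop)) : X ⊆ tconv X :=
  fun _ hx => Set.mem_sInter.2 fun _ hY => hY.2 hx

lemma tropicallyConvex_tconv (X : Set (Fin n → Trop)) : TropicallyConvex (tconv X) :=
  fun x hx y hy l m h => Set.mem_sInter.2 fun Y hY =>
    hY.1 x (Set.mem_sInter.1 hx Y hY) y (Set.mem_sInter.1 hy Y hY) l m h

lemma tconv_subset {X Y : Set (Fin n → Trop)} (hY : TropicallyConvex Y) (h : X ⊆ Y) :
    tconv X ⊆ Y :=
  fun _ hx => Set.mem_sInter.1 hx Y ⟨hY, h⟩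

lemma tconv_eq_self {X : Set (Fin n → Trop)} (hX : TropicallyConvex X) : tconv X = X :=
  (tconv_subset hX subset_rfl).antisymm (subset_tconv X)

lemma IsTropCone.tropicallyConvex_projDehom {A : Type*} {C : Set (Option (Fin n ⊕ A) → Trop)}
    (hC : IsTropCone C) : TropicallyConvex (projDehom C) := by
  rintro x ⟨y, hy⟩ x' ⟨y', hy'⟩ l m hlm
  refine ⟨fun a => (l + y a) ⊔ (m + y' a), ?_⟩
  convert hC _ hy _ hy' l m using 1
  funext o
  rcases o with _ | _ | _ <;> simp [homPt, hlm]

end TropicalConvexity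

/-- Variables of the lifted hull: the homogenizing variable `none`, a point of `𝕋ⁿ`, points of
`𝕋^{1+n+A₁}` and of `𝕋^{1+n+A₂}`, and two slack variables. -/
abbrev HullVar (n : ℕ) (A₁ A₂ : Type) :=
  Option (Fin n ⊕ (Option (Fin n ⊕ A₁) ⊕ Option (Fin n ⊕ A₂) ⊕ Bool))

namespace HullVar

variable {n : ℕ} {A₁ A₂ : Type}

def pt (i : Fin n) : HullVar n A₁ A₂ := some (.inl i)

def left (o : Option (Fin n ⊕ A₁)) : HullVar n A₁ A₂ := some (.inr (.inl o))

def right (o : Option (Fin n ⊕ A₂)) : HullVar n A₁ A₂ := some (.inr (.inr (.inl o)))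

def slack (b : Bool) : HullVar n A₁ A₂ := some (.inr (.inr (.inr b)))

lemma left_injective : (left : _ → HullVar n A₁ A₂).Injective := by
  intro o o' h
  simpa [left] using h

lemma right_injective : (right : _ → HullVar n A₁ A₂).Injective := by
  intro o o' h
  simpa [right] using h

end HullVar

section LiftedHull

open HullVar

variable {n : ℕ} {A₁ A₂ : Type} {C₁ : Set (Option (Fin n ⊕ A₁) → Trop)}
  {C₂ : Set (Option (Fin n ⊕ A₂) → Trop)}

/-- Homogenized form of `z = (λ ⊙ x) ⊕ (μ ⊙ y)` with `λ ⊕ μ = 0`, where `(λ, λ ⊙ x, …) ∈ C₁`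
and `(μ, μ ⊙ y, …) ∈ C₂`.  The slack inequalities `(⨁ᵢ λ ⊙ xᵢ)² ≤ λ ⊙ s` force `λ ⊙ x = -∞`
when `λ = -∞`: without them a recession direction of `C₁` could enter `z`. -/
def liftedHull (C₁ : Set (Option (Fin n ⊕ A₁) → Trop)) (C₂ : Set (Option (Fin n ⊕ A₂) → Trop)) :
    Set (HullVar n A₁ A₂ → Trop) :=
  {w | w ∘ left ∈ C₁ ∧ w ∘ right ∈ C₂ ∧
    (∀ i, w (pt i) ≤ w (left (some (.inl i))) ⊔ w (right (some (.inl i)))) ∧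
    (∀ i, w (left (some (.inl i))) ≤ w (pt i)) ∧
    (∀ i, w (right (some (.inl i))) ≤ w (pt i)) ∧
    w (left none) ≤ w none ∧ w (right none) ≤ w none ∧
    w none ≤ w (left none) ⊔ w (right none) ∧
    (univ.sup fun i => w (left (some (.inl i)))) + (univ.sup fun i => w (left (some (.inl i))))
      ≤ w (left none) + w (slack true) ∧
    (univ.sup fun i => w (right (some (.inl i)))) + (univ.sup fun i => w (right (some (.inl i))))
      ≤ w (right none) + w (slack false)}

lemma IsHMetzler.liftedHull [Fintype A₁] [Fintype A₂] (hC₁ : IsHMetzler C₁)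
    (hC₂ : IsHMetzler C₂) : IsHMetzler (liftedHull C₁ C₂) := by
  classical
  have forall_le_sup {R : Type} [Fintype R] (a b c : R → HullVar n A₁ A₂) (hab : ∀ r, a r ≠ b r)
      (hac : ∀ r, a r ≠ c r) :
      IsHMetzler {w : HullVar n A₁ A₂ → Trop | ∀ r, w (a r) ≤ w (b r) ⊔ w (c r)} := by
    simpa using isHMetzler_forall_sup_le (fun r => {a r}) (fun r => {b r, c r})
      (by simp [hab, hac])
  have forall_le {R : Type} [Fintype R] (a b : R → HullVar n A₁ A₂) (hab : ∀ r, a r ≠ b r) :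
      IsHMetzler {w : HullVar n A₁ A₂ → Trop | ∀ r, w (a r) ≤ w (b r)} := by
    simpa using forall_le_sup a b b hab hab
  have single_le (a b : HullVar n A₁ A₂) (hab : a ≠ b) :
      IsHMetzler {w : HullVar n A₁ A₂ → Trop | w a ≤ w b} := by
    simpa using forall_le (R := Unit) (fun _ => a) (fun _ => b) fun _ => hab
  have single_le_sup (a b c : HullVar n A₁ A₂) (hab : a ≠ b) (hac : a ≠ c) :
      IsHMetzler {w : HullVar n A₁ A₂ → Trop | w a ≤ w b ⊔ w c} := by
    simpa using forall_le_sup (R := Unit) (fun _ => a) (fun _ => b) (fun _ => c)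
      (fun _ => hab) fun _ => hac
  have slackIneq (f : Fin n → HullVar n A₁ A₂) (a b : HullVar n A₁ A₂) :
      IsHMetzler {w : HullVar n A₁ A₂ → Trop |
        (univ.sup fun i => w (f i)) + (univ.sup fun i => w (f i)) ≤ w a + w b} := by
    simpa [Finset.sup_image, Function.comp_def] using
      isHMetzler_sup_add_sup_le (univ.image f) {a} {b}
  exact (hC₁.preimage_comp left_injective).inter <| (hC₂.preimage_comp right_injective).inter <|
    (forall_le_sup _ _ _ (by simp [pt, left]) (by simp [pt, right])).inter <|
    (forall_le _ _ (by simp [pt, left])).inter <| (forall_le _ _ (by simp [pt, right])).inter <|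
    (single_le _ _ (by simp [left])).inter <| (single_le _ _ (by simp [right])).inter <|
    (single_le_sup _ _ _ (by simp [left]) (by simp [right])).inter <|
    (slackIneq _ _ _).inter (slackIneq _ _ _)

lemma IsTropCone.exists_mem_projDehom {A : Type*} {C : Set (Option (Fin n ⊕ A) → Trop)}
    (hC : IsTropCone C) (hne : (projDehom C).Nonempty) {p : Option (Fin n ⊕ A) → Trop}
    (hp : p ∈ C) (hbot : p none = ⊥ → ∀ i, p (some (.inl i)) = ⊥) :
    ∃ x ∈ projDehom C, ∀ i, p (some (.inl i)) = p none + x i := by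
  by_cases h : p none = ⊥
  · obtain ⟨x, hx⟩ := hne
    exact ⟨x, hx, fun i => by simp [h, hbot h]⟩
  obtain ⟨r, hr⟩ := WithBot.ne_bot_iff_exists.1 h
  have cancel (t : Trop) : (r : Trop) + (((-r : ℝ) : Trop) + t) = t := by
    rw [← add_assoc, ← WithBot.coe_add, add_neg_cancel, WithBot.coe_zero, zero_add]
  refine ⟨fun i => ((-r : ℝ) : Trop) + p (some (.inl i)),
    ⟨fun a => ((-r : ℝ) : Trop) + p (some (.inr a)), ?_⟩, fun i => by rw [← hr, cancel]⟩
  convert hC.add_const hp ((-r : ℝ) : Trop) using 1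
  funext o
  rcases o with _ | _ | _
  · rw [← hr, ← WithBot.coe_add, neg_add_cancel]
    rfl
  all_goals rfl

lemma eq_bot_of_sup_add_sup_le {ι : Type*} {s : Finset ι} {f : ι → Trop} {a c : Trop}
    (h : s.sup f + s.sup f ≤ a + c) (ha : a = ⊥) {i : ι} (hi : i ∈ s) : f i = ⊥ := by
  rw [ha, WithBot.bot_add, le_bot_iff, WithBot.add_eq_bot, or_self, Finset.sup_eq_bot_iff] at h
  exact h i hi

lemma tropComb_mem_projDehom_liftedHull (hC₁ : IsTropCone C₁) (hC₂ : IsTropCone C₂)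
    {x y : Fin n → Trop} (hx : x ∈ projDehom C₁) (hy : y ∈ projDehom C₂) {l m : Trop}
    (hlm : l ⊔ m = 0) : (fun i => (l + x i) ⊔ (m + y i)) ∈ projDehom (liftedHull C₁ C₂) := by
  obtain ⟨x', hx'⟩ := hx
  obtain ⟨y', hy'⟩ := hy
  have hsq (c : Trop) (z : Fin n → Trop) : (univ.sup fun i => c + z i) +
      (univ.sup fun i => c + z i) = c + (c + (univ.sup z + univ.sup z)) := by
    rw [← add_finset_sup, add_add_add_comm, add_assoc]
  refine ⟨Sum.elim (fun o => l + homPt (Sum.elim x x') o) <| Sum.elim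
    (fun o => m + homPt (Sum.elim y y') o)
    fun b => bif b then l + (univ.sup x + univ.sup x) else m + (univ.sup y + univ.sup y),
    hC₁.add_const hx' l, hC₂.add_const hy' m, fun _ => le_rfl, fun _ => le_sup_left,
    fun _ => le_sup_right, ?_, ?_, ?_, ?_, ?_⟩
  all_goals simp only [homPt, left, right, slack, Option.elim, Sum.elim_inl, Sum.elim_inr,
    add_zero, cond_true, cond_false]
  exacts [hlm ▸ le_sup_left, hlm ▸ le_sup_right, hlm.ge, (hsq l x).le, (hsq m y).le]

lemma exists_tropComb_of_mem_projDehom_liftedHull (hC₁ : IsTropCone C₁) (hC₂ : IsTropCone C₂)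
    (hne₁ : (projDehom C₁).Nonempty) (hne₂ : (projDehom C₂).Nonempty) {z : Fin n → Trop}
    (hz : z ∈ projDehom (liftedHull C₁ C₂)) :
    ∃ x ∈ projDehom C₁, ∃ y ∈ projDehom C₂, ∃ l m : Trop, l ⊔ m = 0 ∧
      z = fun i => (l + x i) ⊔ (m + y i) := by
  obtain ⟨Y, h₁, h₂, hle, hge₁, hge₂, hl, hm, hlm, hs₁, hs₂⟩ := hz
  obtain ⟨x, hx, hpx⟩ := hC₁.exists_mem_projDehom hne₁ h₁
    fun h i => eq_bot_of_sup_add_sup_le hs₁ h (mem_univ i)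
  obtain ⟨y, hy, hpy⟩ := hC₂.exists_mem_projDehom hne₂ h₂
    fun h i => eq_bot_of_sup_add_sup_le hs₂ h (mem_univ i)
  refine ⟨x, hx, y, hy, _, _, le_antisymm (sup_le hl hm) hlm, funext fun i => ?_⟩
  simp only [Function.comp_apply] at hpx hpy
  rw [← hpx, ← hpy]
  exact le_antisymm (hle i) (sup_le (hge₁ i) (hge₂ i))

theorem tconv_union_projDehom [Fintype A₁] [Fintype A₂] (hC₁ : IsHMetzler C₁)
    (hC₂ : IsHMetzler C₂) (hne₁ : (projDehom C₁).Nonempty) (hne₂ : (projDehom C₂).Nonempty) :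
    tconv (projDehom C₁ ∪ projDehom C₂) = projDehom (liftedHull C₁ C₂) := by
  refine (tconv_subset (hC₁.liftedHull hC₂).isTropCone.tropicallyConvex_projDehom ?_).antisymm
    fun z hz => ?_
  · rintro x (hx | hx)
    · obtain ⟨y, hy⟩ := hne₂
      simpa using tropComb_mem_projDehom_liftedHull hC₁.isTropCone hC₂.isTropCone hx hy
        (l := 0) (m := ⊥) (by simp)
    · obtain ⟨y, hy⟩ := hne₁
      simpa using tropComb_mem_projDehom_liftedHull hC₁.isTropCone hC₂.isTropCone hy hx
        (l := ⊥) (m := 0) (by simp)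
  · obtain ⟨x, hx, y, hy, l, m, hlm, rfl⟩ :=
      exists_tropComb_of_mem_projDehom_liftedHull hC₁.isTropCone hC₂.isTropCone hne₁ hne₂ hz
    exact tropicallyConvex_tconv _ x (subset_tconv _ (.inl hx)) y (subset_tconv _ (.inr hy))
      l m hlm

end LiftedHull

end TropMetzler

open TropMetzler

theorem stmt7 {n : ℕ} (S1 S2 : Set (Fin n → Trop))
    (h1 : IsProjMetzlerSpectrahedron S1) (h2 : IsProjMetzlerSpectrahedron S2) :
    IsProjMetzlerSpectrahedron (tconv (S1 ∪ S2)) := by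
  obtain ⟨A₁, _, C₁, hC₁, rfl⟩ := isProjMetzlerSpectrahedron_iff.1 h1
  obtain ⟨A₂, _, C₂, hC₂, rfl⟩ := isProjMetzlerSpectrahedron_iff.1 h2
  rcases (projDehom C₁).eq_empty_or_nonempty with he₁ | hne₁
  · rwa [he₁, Set.empty_union, tconv_eq_self hC₂.isTropCone.tropicallyConvex_projDehom]
  rcases (projDehom C₂).eq_empty_or_nonempty with he₂ | hne₂
  · rwa [he₂, Set.union_empty, tconv_eq_self hC₁.isTropCone.tropicallyConvex_projDehom]
  rw [tconv_union_projDehom hC₁ hC₂ hne₁ hne₂]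
  exact isProjMetzlerSpectrahedron_iff.2 ⟨_, inferInstance, _, hC₁.liftedHull hC₂, rfl⟩
end

section
/- Let S ⊆ ℝⁿ be a nonempty closed real tropical cone, and define F : ℝⁿ → ℝⁿ by F_k(x) = sup { y_k : y ∈ S, y ≤ x } for each k ∈ [n] (coordinatewise inequality). Then: (1) for every x ∈ ℝⁿ the set {y ∈ S : y ≤ x} is nonempty and each supremum is attained, and in fact F(x) ∈ S; (2) F is monotone and additively homogeneous; (3) S = {x ∈ ℝⁿ : x ≤ F(x)}; and (4) if moreover S is semilinear, then F is semilinear. -/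
open Finset

/-! Points of a tropical cone `S` below `x` are stable under `⊔`, so they form a nonempty,
closed, upward-directed set bounded by `x`; its supremum `F x` is therefore its greatest
element, and monotonicity, homogeneity and `S = {x | x ≤ F x}` follow formally. The graph of
`F` consists of the `(x, z)` with `z ∈ S`, `z ≤ x` and no `y ∈ S` with `y ≤ x`, `y ≰ z`: it is
obtained from `S` by Boolean operations, rational-linear substitutions and one projection, and
semilinear sets are closed under projection by Fourier–Motzkin elimination. -/

def IsRatAffine {d : ℕ} (g : (Fin d → ℝ) → ℝ) : Prop :=
  ∃ (a : Fin d → ℚ) (r : ℝ), ∀ x, g x = ∑ j, (a j : ℝ) * x j + r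

namespace IsRatAffine

variable {d : ℕ} {g h : (Fin d → ℝ) → ℝ}

theorem const (r : ℝ) : IsRatAffine fun _ : Fin d → ℝ => r :=
  ⟨0, r, fun x => by simp⟩

theorem apply (j : Fin d) : IsRatAffine fun x : Fin d → ℝ => x j :=
  ⟨Pi.single j 1, 0, fun x => by simp [Pi.single_apply, apply_ite]⟩

theorem add (hg : IsRatAffine g) (hh : IsRatAffine h) : IsRatAffine fun x => g x + h x := by
  obtain ⟨a, r, hg⟩ := hg
  obtain ⟨b, s, hh⟩ := hh
  exact ⟨a + b, r + s, fun x => by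
    simp only [hg, hh, Pi.add_apply, Rat.cast_add, add_mul, Finset.sum_add_distrib]; ring⟩

theorem const_mul (hg : IsRatAffine g) (q : ℚ) : IsRatAffine fun x => q * g x := by
  obtain ⟨a, r, hg⟩ := hg
  exact ⟨q • a, q * r, fun x => by
    simp only [hg, Pi.smul_apply, smul_eq_mul, Rat.cast_mul, mul_add, Finset.mul_sum, mul_assoc]⟩

theorem neg (hg : IsRatAffine g) : IsRatAffine fun x => -g x := by
  simpa using hg.const_mul (-1)

theorem sub (hg : IsRatAffine g) (hh : IsRatAffine h) : IsRatAffine fun x => g x - h x := by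
  simpa [sub_eq_add_neg] using hg.add hh.neg

theorem sum {ι : Type*} (s : Finset ι) {g : ι → (Fin d → ℝ) → ℝ}
    (hg : ∀ i, IsRatAffine (g i)) : IsRatAffine fun x => ∑ i ∈ s, g i x := by
  classical
  induction s using Finset.induction_on with
  | empty => simpa using const 0
  | insert i s hi ih => simpa [Finset.sum_insert hi] using (hg i).add ih

theorem comp {e : ℕ} {g : (Fin e → ℝ) → ℝ} (hg : IsRatAffine g) {f : (Fin d → ℝ) → Fin e → ℝ}
    (hf : ∀ i, IsRatAffine fun x => f x i) : IsRatAffine fun x => g (f x) := by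
  obtain ⟨a, r, hg⟩ := hg
  simpa only [hg] using (sum Finset.univ fun i => (hf i).const_mul (a i)).add (const r)

theorem exists_comp_snoc {g : (Fin (d + 1) → ℝ) → ℝ} (hg : IsRatAffine g) :
    ∃ g' : (Fin d → ℝ) → ℝ, IsRatAffine g' ∧ ∃ c : ℚ, ∀ x t, g (Fin.snoc x t) = g' x + c * t := by
  obtain ⟨a, r, hg⟩ := hg
  refine ⟨fun x => ∑ j, (a j.castSucc : ℝ) * x j + r, ⟨_, r, fun _ => rfl⟩, a (Fin.last d),
    fun x t => ?_⟩
  simp only [hg, Fin.sum_univ_castSucc, Fin.snoc_castSucc, Fin.snoc_last]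
  ring

theorem snoc_apply {φ : (Fin d → ℝ) → ℝ} (hφ : IsRatAffine φ) (i : Fin (d + 1)) :
    IsRatAffine fun x => (Fin.snoc x (φ x) : Fin (d + 1) → ℝ) i := by
  induction i using Fin.lastCases with
  | last => simpa using hφ
  | cast j => simpa using apply j

end IsRatAffine

section Semilinear

variable {d : ℕ}

theorem BasicSemilinear.of_isRatAffine {ι κ : Type*} [Finite ι] [Finite κ]
    {g : ι → (Fin d → ℝ) → ℝ} {h : κ → (Fin d → ℝ) → ℝ}
    (hg : ∀ i, IsRatAffine (g i)) (hh : ∀ k, IsRatAffine (h k)) :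
    BasicSemilinear {x | (∀ i, 0 < g i x) ∧ ∀ k, h k x = 0} := by
  choose a r hg using hg
  choose b s hh using hh
  let e := Finite.equivFin ι
  let e' := Finite.equivFin κ
  refine ⟨_, _, fun i => a (e.symm i), fun i => -r (e.symm i),
    fun k => b (e'.symm k), fun k => -s (e'.symm k), ?_⟩
  ext x
  simp only [Set.mem_ofPred_eq, hg, hh, gt_iff_lt, neg_lt_iff_pos_add, eq_neg_iff_add_eq_zero]
  rw [e.forall_congr_left, e'.forall_congr_left]

theorem BasicSemilinear.exists_isRatAffine {S : Set (Fin d → ℝ)} (hS : BasicSemilinear S) :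
    ∃ (p q : ℕ) (g : Fin p → (Fin d → ℝ) → ℝ) (h : Fin q → (Fin d → ℝ) → ℝ),
      (∀ i, IsRatAffine (g i)) ∧ (∀ k, IsRatAffine (h k)) ∧
      S = {x | (∀ i, 0 < g i x) ∧ ∀ k, h k x = 0} := by
  obtain ⟨p, q, A, b, C, c, rfl⟩ := hS
  refine ⟨p, q, fun i x => ∑ j, (A i j : ℝ) * x j - b i, fun k x => ∑ j, (C k j : ℝ) * x j - c k,
    fun i => ⟨A i, -b i, fun x => sub_eq_add_neg _ _⟩,
    fun k => ⟨C k, -c k, fun x => sub_eq_add_neg _ _⟩, ?_⟩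
  ext x
  simp only [Set.mem_ofPred_eq, sub_pos, sub_eq_zero, gt_iff_lt]

theorem BasicSemilinear.iInter {ι : Type*} [Finite ι] {S : ι → Set (Fin d → ℝ)}
    (hS : ∀ i, BasicSemilinear (S i)) : BasicSemilinear (⋂ i, S i) := by
  choose p q g h hg hh hS using fun i => (hS i).exists_isRatAffine
  convert BasicSemilinear.of_isRatAffine (g := fun s : Σ i, Fin (p i) => g s.1 s.2)
    (h := fun s : Σ i, Fin (q i) => h s.1 s.2) (fun s => hg s.1 s.2) (fun s => hh s.1 s.2)
  ext x
  simp [hS, Sigma.forall, forall_and]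

theorem Semilinear.of_basicSemilinear {S : Set (Fin d → ℝ)} (hS : BasicSemilinear S) :
    Semilinear S :=
  ⟨1, fun _ => S, fun _ => hS, Set.iUnion_const S |>.symm⟩

theorem Semilinear.iUnion {ι : Type*} [Finite ι] {S : ι → Set (Fin d → ℝ)}
    (hS : ∀ i, Semilinear (S i)) : Semilinear (⋃ i, S i) := by
  choose N f hf hS using hS
  let e := Finite.equivFin (Σ i, Fin (N i))
  refine ⟨_, fun k => f (e.symm k).1 (e.symm k).2, fun k => hf _ _, ?_⟩
  rw [e.symm.surjective.iUnion_comp (fun s => f s.1 s.2), Set.iUnion_sigma]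
  simp only [hS]

theorem Semilinear.iInter {ι : Type*} [Finite ι] {S : ι → Set (Fin d → ℝ)}
    (hS : ∀ i, Semilinear (S i)) : Semilinear (⋂ i, S i) := by
  choose N f hf hS using hS
  simp only [hS]
  have distrib : ⋂ i, ⋃ j, f i j = ⋃ c : ∀ i, Fin (N i), ⋂ i, f i (c i) := iInf_iSup_eq
  rw [distrib]
  exact .iUnion fun c => .of_basicSemilinear (.iInter fun i => hf i (c i))

theorem Semilinear.union {S T : Set (Fin d → ℝ)} (hS : Semilinear S) (hT : Semilinear T) :
    Semilinear (S ∪ T) := by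
  rw [Set.union_eq_iUnion]
  exact .iUnion (Bool.forall_bool.2 ⟨hT, hS⟩)

theorem Semilinear.inter {S T : Set (Fin d → ℝ)} (hS : Semilinear S) (hT : Semilinear T) :
    Semilinear (S ∩ T) := by
  rw [Set.inter_eq_iInter]
  exact .iInter (Bool.forall_bool.2 ⟨hT, hS⟩)

theorem semilinear_setOf_pos {g : (Fin d → ℝ) → ℝ} (hg : IsRatAffine g) :
    Semilinear {x | 0 < g x} := by
  convert Semilinear.of_basicSemilinear (.of_isRatAffine (g := fun _ : Unit => g)
    (h := Empty.elim) (fun _ => hg) (fun k => k.elim))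
  simp

theorem semilinear_setOf_eq_zero {g : (Fin d → ℝ) → ℝ} (hg : IsRatAffine g) :
    Semilinear {x | g x = 0} := by
  convert Semilinear.of_basicSemilinear (.of_isRatAffine (g := Empty.elim)
    (h := fun _ : Unit => g) (fun i => i.elim) (fun _ => hg))
  simp

theorem semilinear_setOf_nonneg {g : (Fin d → ℝ) → ℝ} (hg : IsRatAffine g) :
    Semilinear {x | 0 ≤ g x} := by
  have : {x | 0 ≤ g x} = {x | 0 < g x} ∪ {x | g x = 0} := by
    ext x
    simp [le_iff_lt_or_eq, eq_comm]
  rw [this]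
  exact (semilinear_setOf_pos hg).union (semilinear_setOf_eq_zero hg)

theorem semilinear_setOf_ne_zero {g : (Fin d → ℝ) → ℝ} (hg : IsRatAffine g) :
    Semilinear {x | g x ≠ 0} := by
  have : {x | g x ≠ 0} = {x | 0 < g x} ∪ {x | 0 < -g x} := by
    ext x
    simp only [Set.mem_ofPred_eq, Set.mem_union, neg_pos]
    exact ne_comm.trans ne_iff_lt_or_gt
  rw [this]
  exact (semilinear_setOf_pos hg).union (semilinear_setOf_pos hg.neg)

theorem BasicSemilinear.semilinear_compl {S : Set (Fin d → ℝ)} (hS : BasicSemilinear S) :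
    Semilinear Sᶜ := by
  obtain ⟨p, q, g, h, hg, hh, rfl⟩ := hS.exists_isRatAffine
  have : {x | (∀ i, 0 < g i x) ∧ ∀ k, h k x = 0}ᶜ =
      (⋃ i, {x | 0 ≤ -g i x}) ∪ ⋃ k, {x | h k x ≠ 0} := by
    ext x
    simp [imp_iff_not_or]
  rw [this]
  exact (Semilinear.iUnion fun i => semilinear_setOf_nonneg (hg i).neg).union
    (Semilinear.iUnion fun k => semilinear_setOf_ne_zero (hh k))

theorem Semilinear.compl {S : Set (Fin d → ℝ)} (hS : Semilinear S) : Semilinear Sᶜ := by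
  obtain ⟨N, f, hf, rfl⟩ := hS
  rw [Set.compl_iUnion]
  exact .iInter fun i => (hf i).semilinear_compl

theorem Semilinear.preimage {e : ℕ} {S : Set (Fin e → ℝ)} (hS : Semilinear S)
    {f : (Fin d → ℝ) → Fin e → ℝ} (hf : ∀ i, IsRatAffine fun x => f x i) :
    Semilinear (f ⁻¹' S) := by
  obtain ⟨N, T, hT, rfl⟩ := hS
  rw [Set.preimage_iUnion]
  refine .iUnion fun i => .of_basicSemilinear ?_
  obtain ⟨p, q, g, h, hg, hh, hTi⟩ := (hT i).exists_isRatAffine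
  rw [hTi]
  exact .of_isRatAffine (fun i => (hg i).comp hf) (fun k => (hh k).comp hf)

theorem Semilinear.setOf_exists_snoc_mem_of_eq {T : Set (Fin (d + 1) → ℝ)} (hT : Semilinear T)
    {φ : (Fin d → ℝ) → ℝ} (hφ : IsRatAffine φ) (hT_eq : ∀ x t, Fin.snoc x t ∈ T → t = φ x) :
    Semilinear {x : Fin d → ℝ | ∃ t, Fin.snoc x t ∈ T} := by
  have : {x : Fin d → ℝ | ∃ t, Fin.snoc x t ∈ T} = (fun x => Fin.snoc x (φ x)) ⁻¹' T := by
    ext x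
    refine ⟨fun ⟨t, ht⟩ => ?_, fun hx => ⟨_, hx⟩⟩
    rw [Set.mem_preimage, ← hT_eq x t ht]
    exact ht
  rw [this]
  exact hT.preimage hφ.snoc_apply

theorem exists_forall_pos_add_mul_iff {ι : Type*} [Finite ι] (u a : ι → ℝ) :
    (∃ t, ∀ i, 0 < u i + a i * t) ↔
      (∀ i, a i = 0 → 0 < u i) ∧ ∀ i j, 0 < a i → a j < 0 → 0 < u i / a i - u j / a j := by
  have lower {i t} (hi : 0 < a i) : 0 < u i + a i * t ↔ -u i / a i < t := by
    rw [div_lt_iff₀ hi]; constructor <;> intro <;> linarith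
  have upper {j t} (hj : a j < 0) : 0 < u j + a j * t ↔ t < -u j / a j := by
    rw [lt_div_iff_of_neg hj]; constructor <;> intro <;> linarith
  constructor
  · rintro ⟨t, ht⟩
    refine ⟨fun i hi => by simpa [hi] using ht i, fun i j hi hj => ?_⟩
    have := ((lower hi).1 (ht i)).trans ((upper hj).1 (ht j))
    rw [neg_div, neg_div] at this
    linarith
  · rintro ⟨hzero, hpair⟩
    obtain ⟨t, hlo, hup⟩ := Set.Finite.exists_between'
      (Set.finite_range fun i : {i // 0 < a i} => -u i / a i)
      (Set.finite_range fun j : {j // a j < 0} => -u j / a j) (by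
        rintro _ ⟨⟨i, hi⟩, rfl⟩ _ ⟨⟨j, hj⟩, rfl⟩
        have := hpair i j hi hj
        simp only [neg_div]
        linarith)
    refine ⟨t, fun i => ?_⟩
    rcases lt_trichotomy (a i) 0 with hi | hi | hi
    · exact (upper hi).2 (hup _ ⟨⟨i, hi⟩, rfl⟩)
    · simpa [hi] using hzero i hi
    · exact (lower hi).2 (hlo _ ⟨⟨i, hi⟩, rfl⟩)

theorem BasicSemilinear.semilinear_setOf_exists_snoc_mem {T : Set (Fin (d + 1) → ℝ)}
    (hT : BasicSemilinear T) : Semilinear {x : Fin d → ℝ | ∃ t, Fin.snoc x t ∈ T} := by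
  obtain ⟨p, q, g, h, hg, hh, rfl⟩ := hT.exists_isRatAffine
  choose g' hg' a hga using fun i => (hg i).exists_comp_snoc
  choose h' hh' b hhb using fun k => (hh k).exists_comp_snoc
  -- An equation involving `t` determines it as a rational-affine function of `x`; otherwise
  -- `t` only occurs in the strict inequalities and is eliminated by Fourier–Motzkin.
  by_cases hb : ∃ k, b k ≠ 0
  · obtain ⟨k, hk⟩ := hb
    refine (Semilinear.of_basicSemilinear (.of_isRatAffine hg hh)).setOf_exists_snoc_mem_of_eq
      ((hh' k).const_mul (-(b k)⁻¹)) fun x t ht => ?_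
    have htk := ht.2 k
    rw [hhb] at htk
    have hk' : (b k : ℝ) ≠ 0 := Rat.cast_ne_zero.2 hk
    push_cast
    field_simp
    linarith
  · push Not at hb
    have : {x | ∃ t, Fin.snoc x t ∈ {y | (∀ i, 0 < g i y) ∧ ∀ k, h k y = 0}} =
        (⋂ k, {x | h' k x = 0}) ∩ (⋂ i : {i // (a i : ℝ) = 0}, {x | 0 < g' i x}) ∩
          ⋂ ij : {i // 0 < (a i : ℝ)} × {j // (a j : ℝ) < 0},
            {x | 0 < g' ij.1 x / a ij.1 - g' ij.2 x / a ij.2} := by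
      ext x
      simp only [Set.mem_ofPred_eq, Set.mem_inter_iff, Set.mem_iInter, hga, hhb, hb,
        Rat.cast_zero, zero_mul, add_zero, exists_and_right, exists_forall_pos_add_mul_iff,
        Subtype.forall, Prod.forall]
      tauto
    rw [this]
    refine ((Semilinear.iInter fun k => semilinear_setOf_eq_zero (hh' k)).inter
      (Semilinear.iInter fun i : {i // (a i : ℝ) = 0} => semilinear_setOf_pos (hg' i.1))).inter
      (Semilinear.iInter fun ij => semilinear_setOf_pos ?_)
    simpa [div_eq_inv_mul] using
      ((hg' ij.1).const_mul (a ij.1)⁻¹).sub ((hg' ij.2).const_mul (a ij.2)⁻¹)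

theorem Semilinear.setOf_exists_snoc_mem {T : Set (Fin (d + 1) → ℝ)} (hT : Semilinear T) :
    Semilinear {x : Fin d → ℝ | ∃ t, Fin.snoc x t ∈ T} := by
  obtain ⟨N, f, hf, rfl⟩ := hT
  have : {x : Fin d → ℝ | ∃ t, Fin.snoc x t ∈ ⋃ i, f i} = ⋃ i, {x | ∃ t, Fin.snoc x t ∈ f i} := by
    ext x
    simp only [Set.mem_ofPred_eq, Set.mem_iUnion]
    exact exists_comm
  rw [this]
  exact .iUnion fun i => (hf i).semilinear_setOf_exists_snoc_mem

theorem Semilinear.setOf_exists_append_mem {e : ℕ} {T : Set (Fin (d + e) → ℝ)}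
    (hT : Semilinear T) : Semilinear {x : Fin d → ℝ | ∃ y : Fin e → ℝ, Fin.append x y ∈ T} := by
  induction e with
  | zero =>
    have : {x : Fin d → ℝ | ∃ y : Fin 0 → ℝ, Fin.append x y ∈ T} = T := by
      ext x
      simp [Fin.append_right_nil _ _ rfl]
    rwa [this]
  | succ e ih =>
    convert ih hT.setOf_exists_snoc_mem using 1
    ext x
    constructor
    · rintro ⟨y, hy⟩
      exact ⟨Fin.init y, y (Fin.last e), by rwa [← Fin.append_snoc, Fin.snoc_init_self]⟩
    · rintro ⟨y, t, hyt⟩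
      exact ⟨Fin.snoc y t, by rwa [Fin.append_snoc]⟩

theorem semilinear_setOf_le {e : ℕ} {f g : (Fin d → ℝ) → Fin e → ℝ}
    (hf : ∀ i, IsRatAffine fun x => f x i) (hg : ∀ i, IsRatAffine fun x => g x i) :
    Semilinear {x | f x ≤ g x} := by
  have : {x | f x ≤ g x} = ⋂ i, {x | 0 ≤ g x i - f x i} := by
    ext x
    simp [Pi.le_def]
  rw [this]
  exact .iInter fun i => semilinear_setOf_nonneg ((hg i).sub (hf i))

theorem SemilinearFun.of_isGreatest {n : ℕ} {S : Set (Fin n → ℝ)} (hS : Semilinear S)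
    {F : (Fin n → ℝ) → Fin n → ℝ} (hF : ∀ x, IsGreatest {y ∈ S | y ≤ x} (F x)) :
    SemilinearFun F := by
  let fst {m : ℕ} (w : Fin (m + n) → ℝ) : Fin m → ℝ := fun i => w (Fin.castAdd n i)
  let snd {m : ℕ} (w : Fin (m + n) → ℝ) : Fin n → ℝ := fun i => w (Fin.natAdd m i)
  have hfst {m : ℕ} (i : Fin m) : IsRatAffine fun w : Fin (m + n) → ℝ => fst w i :=
    IsRatAffine.apply _
  have hsnd {m : ℕ} (i : Fin n) : IsRatAffine fun w : Fin (m + n) → ℝ => snd w i :=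
    IsRatAffine.apply _
  have fst_append {m : ℕ} (x : Fin m → ℝ) (y : Fin n → ℝ) : fst (Fin.append x y) = x :=
    funext fun i => Fin.append_left x y i
  have snd_append {m : ℕ} (x : Fin m → ℝ) (y : Fin n → ℝ) : snd (Fin.append x y) = y :=
    funext fun i => Fin.append_right x y i
  let refuters : Set (Fin (n + n + n) → ℝ) :=
    snd ⁻¹' S ∩ {v | snd v ≤ fst (fst v)} ∩ {v | snd v ≤ snd (fst v)}ᶜ
  have graph : Set.range (fun x => Fin.append x (F x)) =
      snd ⁻¹' S ∩ {w | snd w ≤ fst w} ∩ {w | ∃ y, Fin.append w y ∈ refuters}ᶜ := by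
    ext w
    have hrange : w ∈ Set.range (fun x => Fin.append x (F x)) ↔
        IsGreatest {y ∈ S | y ≤ fst w} (snd w) := by
      refine ⟨?_, fun h => ⟨fst w, ?_⟩⟩
      · rintro ⟨x, rfl⟩
        rw [fst_append, snd_append]
        exact hF x
      · change Fin.append (fst w) (F (fst w)) = w
        rw [(hF _).unique h]
        exact Fin.append_castAdd_natAdd
    rw [hrange]
    simp [IsGreatest, upperBounds, refuters, fst_append, snd_append]
  rw [SemilinearFun, graph]
  refine (hS.preimage hsnd).inter (semilinear_setOf_le hsnd hfst) |>.inter (.compl ?_)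
  refine .setOf_exists_append_mem (((hS.preimage hsnd).inter ?_).inter (.compl ?_))
  · exact semilinear_setOf_le hsnd fun i => (hfst i).comp hfst
  · exact semilinear_setOf_le hsnd fun i => (hsnd i).comp hfst

end Semilinear

theorem IsClosed.isLUB_mem_of_directedOn {α : Type*} [Preorder α] [TopologicalSpace α]
    [SupConvergenceClass α] {s : Set α} {a : α} (hs : IsClosed s) (ha : IsLUB s a)
    (hne : s.Nonempty) (hd : DirectedOn (· ≤ ·) s) : a ∈ s := by
  have := hne.to_subtype
  have := hd.isDirectedOrder
  have hlim : Filter.Tendsto (Subtype.val : s → α) Filter.atTop (nhds a) :=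
    tendsto_atTop_isLUB (fun _ _ h => h) (by rwa [Subtype.range_coe])
  exact hs.mem_of_tendsto hlim (.of_forall fun y => y.2)

namespace RealTropCone

variable {n : ℕ} {S : Set (Fin n → ℝ)}

theorem const_add_mem (hS : RealTropCone S) {x : Fin n → ℝ} (hx : x ∈ S) (c : ℝ) :
    (fun i => c + x i) ∈ S := by
  simpa using hS x hx x hx c c

theorem sup_mem (hS : RealTropCone S) {x y : Fin n → ℝ} (hx : x ∈ S) (hy : y ∈ S) :
    x ⊔ y ∈ S := by
  simpa [← Pi.sup_apply] using hS x hx y hy 0 0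

theorem directedOn_setOf_le (hS : RealTropCone S) (x : Fin n → ℝ) :
    DirectedOn (· ≤ ·) {y ∈ S | y ≤ x} :=
  fun y hy z hz => ⟨y ⊔ z, ⟨hS.sup_mem hy.1 hz.1, sup_le hy.2 hz.2⟩, le_sup_left, le_sup_right⟩

theorem nonempty_setOf_le (hS : RealTropCone S) (hne : S.Nonempty) (x : Fin n → ℝ) :
    {y ∈ S | y ≤ x}.Nonempty := by
  obtain ⟨s, hs⟩ := hne
  obtain ⟨c, hc⟩ := (Set.finite_range fun i => x i - s i).bddBelow
  refine ⟨fun i => c + s i, hS.const_add_mem hs c, fun i => ?_⟩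
  have := hc ⟨i, rfl⟩
  dsimp only at this ⊢
  linarith

theorem isGreatest_sSup (hS : RealTropCone S) (hne : S.Nonempty) (hclosed : IsClosed S)
    (x : Fin n → ℝ) : IsGreatest {y ∈ S | y ≤ x} (sSup {y ∈ S | y ≤ x}) := by
  have hL := hS.nonempty_setOf_le hne x
  have hlub := isLUB_csSup hL ⟨x, fun y hy => hy.2⟩
  exact ⟨(hclosed.inter isClosed_Iic).isLUB_mem_of_directedOn hlub hL (hS.directedOn_setOf_le x),
    hlub.1⟩

theorem addHomog_of_isGreatest (hS : RealTropCone S) {F : (Fin n → ℝ) → Fin n → ℝ}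
    (hF : ∀ x, IsGreatest {y ∈ S | y ≤ x} (F x)) : AddHomog F := by
  intro c x
  refine (hF _).unique ⟨⟨hS.const_add_mem (hF x).1.1 c, fun i => ?_⟩, fun y hy i => ?_⟩
  · simpa using (hF x).1.2 i
  · have hy' : (fun i => -c + y i) ≤ x := fun i => by
      have := hy.2 i
      dsimp only at this ⊢
      linarith
    have := (hF x).2 ⟨hS.const_add_mem hy.1 (-c), hy'⟩ i
    dsimp only at this ⊢
    linarith

end RealTropCone

section GreatestBelow

variable {n : ℕ} {S : Set (Fin n → ℝ)} {F : (Fin n → ℝ) → Fin n → ℝ}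

theorem monotone_of_isGreatest (hF : ∀ x, IsGreatest {y ∈ S | y ≤ x} (F x)) : Monotone F :=
  fun x x' hxx' => (hF x').2 ⟨(hF x).1.1, (hF x).1.2.trans hxx'⟩

theorem eq_setOf_le_of_isGreatest (hF : ∀ x, IsGreatest {y ∈ S | y ≤ x} (F x)) :
    S = {x | x ≤ F x} := by
  ext x
  refine ⟨fun hx => (hF x).2 ⟨hx, le_rfl⟩, fun hx => ?_⟩
  rw [le_antisymm hx (hF x).1.2]
  exact (hF x).1.1

end GreatestBelow

theorem stmt10 {n : ℕ} (S : Set (Fin n → ℝ)) (hne : S.Nonempty)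
    (hclosed : IsClosed S) (hcone : RealTropCone S)
    (F : (Fin n → ℝ) → Fin n → ℝ)
    (hF : ∀ x k, F x k = sSup {t : ℝ | ∃ y ∈ S, y ≤ x ∧ y k = t}) :
    (∀ x, {y ∈ S | y ≤ x}.Nonempty) ∧
    (∀ x k, ∃ y ∈ S, y ≤ x ∧ y k = F x k) ∧
    (∀ x, F x ∈ S) ∧
    Monotone F ∧ AddHomog F ∧
    S = {x | x ≤ F x} ∧
    (Semilinear S → SemilinearFun F) := by
  have hF_eq : ∀ x, F x = sSup {y ∈ S | y ≤ x} := fun x => funext fun k => by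
    rw [hF, sSup_apply_eq_sSup_image]
    congr 1
    ext t
    simp [and_assoc]
  have hgreatest : ∀ x, IsGreatest {y ∈ S | y ≤ x} (F x) := fun x => by
    rw [hF_eq]
    exact hcone.isGreatest_sSup hne hclosed x
  exact ⟨hcone.nonempty_setOf_le hne, fun x k => ⟨F x, (hgreatest x).1.1, (hgreatest x).1.2, rfl⟩,
    fun x => (hgreatest x).1.1, monotone_of_isGreatest hgreatest,
    hcone.addHomog_of_isGreatest hgreatest, eq_setOf_le_of_isGreatest hgreatest,
    fun hS => .of_isGreatest hS hgreatest⟩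
end

section
/- Let n ≥ 1 and, for each v ∈ [n], let E_v be a nonempty finite set. For every e ∈ E_v let r_e ∈ ℝ, and let (a_{e,j}, u_{e,j})_{j ∈ J_e} and (b_{e,l}, w_{e,l})_{l ∈ L_e} be two nonempty finite families with a_{e,j}, b_{e,l} ∈ ℝ and u_{e,j}, w_{e,l} ∈ [n]. Define F : 𝕋ⁿ → 𝕋ⁿ by F_v(x) = min_{e ∈ E_v} ( r_e + ½·( max_{j ∈ J_e} (a_{e,j} + x_{u_{e,j}}) + max_{l ∈ L_e} (b_{e,l} + x_{w_{e,l}}) ) ), where r + ½·z for z ∈ 𝕋 is interpreted as r + z/2 for z ∈ ℝ and as −∞ for z = −∞. Then the set {x ∈ 𝕋ⁿ : x_v ≤ F_v(x) for all v ∈ [n]} is a tropical Metzler spectrahedral cone, i.e., there exist m ≥ 1 and symmetric tropical Metzler matrices Q⁽¹⁾, …, Q⁽ⁿ⁾ of size m such that this set equals S(−∞|Q⁽¹⁾,…,Q⁽ⁿ⁾). -/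
open Finset

/-!
Unfolding the minimum, `x ∈ {x | x ≤ F x}` means that for every `v` and `e ∈ E_v`
`2 (x_v - r_e) ≤ A_e(x) + B_e(x)`, where `A_e`, `B_e` are the two tropical linear forms in `F_v`.
This is the 2×2 tropical minor condition of the Metzler matrix with diagonal `(A_e(x), B_e(x))`
and off-diagonal modulus `x_v - r_e`, all three tropically linear in `x`; the block-diagonal
sum of these blocks over all pairs `(v, e)` cuts out the set.
-/

section TropicalLinearForms

variable {n : ℕ}

lemma tropAff_bot_const_bot (x : Fin n → Trop) : tropAff ⊥ (fun _ => ⊥) x = ⊥ := by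
  simp [tropAff]

def tropFormCoeff {ι : Type*} [Fintype ι] (c : ι → Trop) (g : ι → Fin n) (k : Fin n) :
    Trop :=
  univ.sup fun j => if g j = k then c j else ⊥

lemma tropAff_bot_tropFormCoeff {ι : Type*} [Fintype ι] (c : ι → Trop) (g : ι → Fin n)
    (x : Fin n → Trop) :
    tropAff ⊥ (tropFormCoeff c g) x = univ.sup fun j => c j + x (g j) := by
  have add_right_sup (k : Fin n) : tropFormCoeff c g k + x k
      = univ.sup fun j => if g j = k then c j + x k else ⊥ := by
    rw [tropFormCoeff, apply_sup_eq_sup_comp_of_linearOrder (· + x k)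
      (fun _ _ h => add_le_add_left h _) (WithBot.bot_add _)]
    congr 1 with j
    simp only [Function.comp_apply]
    split_ifs <;> simp
  simp only [tropAff, bot_sup_eq, add_right_sup]
  rw [Finset.sup_comm]
  simp [Finset.sup_ite, Finset.filter_eq]

end TropicalLinearForms

lemma le_map_add_half_iff (r : ℝ) (y z : Trop) :
    y ≤ WithBot.map (fun t => r + t / 2) z ↔
      ((-r : ℝ) : Trop) + y + (((-r : ℝ) : Trop) + y) ≤ z := by
  induction y using WithBot.recBotCoe with
  | bot => simp
  | coe s =>
    induction z using WithBot.recBotCoe with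
    | bot => simp
    | coe t =>
      rw [WithBot.map_coe, WithBot.coe_le_coe, ← WithBot.coe_add, ← WithBot.coe_add,
        WithBot.coe_le_coe]
      constructor <;> intro h <;> linarith

section PairedMetzler

variable {T : Type*} {n m : ℕ}

lemma tropAff_bot_sumElim (A B : T → Fin n → Trop) (p : T ⊕ T) (x : Fin n → Trop) :
    tropAff ⊥ (fun k => Sum.elim (fun t => A t k) (fun t => B t k) p) x
      = Sum.elim (fun t => tropAff ⊥ (A t) x) (fun t => tropAff ⊥ (B t) x) p := by
  rcases p with t | t <;> rfl

variable [DecidableEq T]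

def pairOffdiag (f : T → Trop) : T ⊕ T → T ⊕ T → Trop
  | .inl s, .inr t | .inr s, .inl t => if s = t then f s else ⊥
  | _, _ => ⊥

@[simp] lemma pairOffdiag_inl_inr (f : T → Trop) (t : T) :
    pairOffdiag f (.inl t) (.inr t) = f t := if_pos rfl

@[simp] lemma pairOffdiag_inr_inl (f : T → Trop) (t : T) :
    pairOffdiag f (.inr t) (.inl t) = f t := if_pos rfl

lemma pairOffdiag_comm (f : T → Trop) (p q : T ⊕ T) :
    pairOffdiag f p q = pairOffdiag f q p := by
  rcases p with s | s <;> rcases q with t | t <;> by_cases h : s = t <;>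
    simp [pairOffdiag, h, eq_comm]

lemma pairOffdiag_self (f : T → Trop) (p : T ⊕ T) : pairOffdiag f p p = ⊥ := by
  rcases p with s | s <;> rfl

lemma forall_ne_pairOffdiag_add_self_le_iff (f : T → Trop) (d : T ⊕ T → Trop) :
    (∀ p q, p ≠ q → pairOffdiag f p q + pairOffdiag f p q ≤ d p + d q) ↔
      ∀ t, f t + f t ≤ d (.inl t) + d (.inr t) := by
  refine ⟨fun h t => by simpa using h (.inl t) (.inr t) Sum.inl_ne_inr, fun h => ?_⟩
  rintro (s | s) (t | t) -
  · simp [pairOffdiag]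
  · obtain rfl | hst := eq_or_ne s t
    · simpa using h s
    · simp [pairOffdiag, hst]
  · obtain rfl | hst := eq_or_ne s t
    · simpa [add_comm (d (.inr s))] using h s
    · simp [pairOffdiag, hst]
  · simp [pairOffdiag]

lemma tropAff_bot_pairOffdiag (ℓ : T → Fin n → Trop) (p q : T ⊕ T) (x : Fin n → Trop) :
    tropAff ⊥ (fun k => pairOffdiag (fun t => ℓ t k) p q) x
      = pairOffdiag (fun t => tropAff ⊥ (ℓ t) x) p q := by
  rcases p with s | s <;> rcases q with t | t <;> by_cases hst : s = t <;>
    simp [pairOffdiag, hst, tropAff_bot_const_bot]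

/-- The `k`-th coefficient matrix of the block-diagonal sum, over `t : T`, of the 2×2 blocks
`[[A t, ℓ t], [ℓ t, B t]]`, whose rows `inl t`, `inr t` are numbered through `φ`. -/
def pairedMetzler (φ : Fin m ≃ T ⊕ T) (ℓ A B : T → Fin n → Trop) (k : Fin n) :
    MetzlerData m where
  Dp i := Sum.elim (fun t => A t k) (fun t => B t k) (φ i)
  Dm _ := ⊥
  offdiag i j := pairOffdiag (fun t => ℓ t k) (φ i) (φ j)
  diag_sign _ := .inr rfl
  offdiag_symm _ _ := pairOffdiag_comm _ _ _
  offdiag_diag _ := pairOffdiag_self _ _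

lemma mem_metzlerSpectrahedron_pairedMetzler (φ : Fin m ≃ T ⊕ T)
    (ℓ A B : T → Fin n → Trop) (x : Fin n → Trop) :
    x ∈ metzlerSpectrahedron (botMetzler m) (pairedMetzler φ ℓ A B) ↔
      ∀ t, tropAff ⊥ (ℓ t) x + tropAff ⊥ (ℓ t) x ≤
        tropAff ⊥ (A t) x + tropAff ⊥ (B t) x := by
  simp only [metzlerSpectrahedron, Set.mem_ofPred_eq, pairedMetzler, botMetzler,
    tropAff_bot_const_bot, bot_le, implies_true, true_and, tropAff_bot_pairOffdiag,
    tropAff_bot_sumElim]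
  refine Iff.trans ?_ (forall_ne_pairOffdiag_add_self_le_iff _
    (Sum.elim (fun t => tropAff ⊥ (A t) x) (fun t => tropAff ⊥ (B t) x)))
  refine ⟨fun h p q hpq => ?_, fun h i j hij => h _ _ (φ.injective.ne hij)⟩
  simpa using h (φ.symm p) (φ.symm q) (by simpa using hpq)

end PairedMetzler

theorem exists_metzlerSpectrahedron_eq_setOf_add_self_le {n : ℕ} {T : Type*} [Fintype T]
    [DecidableEq T] [Nonempty T] (ℓ A B : T → Fin n → Trop) :
    ∃ m : ℕ, 1 ≤ m ∧ ∃ Q : Fin n → MetzlerData m,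
      {x | ∀ t, tropAff ⊥ (ℓ t) x + tropAff ⊥ (ℓ t) x ≤
        tropAff ⊥ (A t) x + tropAff ⊥ (B t) x} =
        metzlerSpectrahedron (botMetzler m) Q :=
  ⟨_, Fintype.card_pos, pairedMetzler (Fintype.equivFin (T ⊕ T)).symm ℓ A B,
    Set.ext fun x => (mem_metzlerSpectrahedron_pairedMetzler _ ℓ A B x).symm⟩

theorem stmt11 {n : ℕ} (hn : 1 ≤ n)
    (E : Fin n → ℕ) (hE : ∀ v, 0 < E v)
    (r : ∀ v : Fin n, Fin (E v) → ℝ)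
    (J : ∀ v : Fin n, Fin (E v) → ℕ) (hJ : ∀ v e, 0 < J v e)
    (L : ∀ v : Fin n, Fin (E v) → ℕ) (hL : ∀ v e, 0 < L v e)
    (a : ∀ (v : Fin n) (e : Fin (E v)), Fin (J v e) → ℝ)
    (u : ∀ (v : Fin n) (e : Fin (E v)), Fin (J v e) → Fin n)
    (b : ∀ (v : Fin n) (e : Fin (E v)), Fin (L v e) → ℝ)
    (w : ∀ (v : Fin n) (e : Fin (E v)), Fin (L v e) → Fin n)
    (F : (Fin n → Trop) → Fin n → Trop)
    (hF : ∀ x v, F x v =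
      Finset.univ.inf' ⟨⟨0, hE v⟩, Finset.mem_univ _⟩ (fun e =>
        WithBot.map (fun t => r v e + t / 2)
          ((Finset.univ.sup' ⟨⟨0, hJ v e⟩, Finset.mem_univ _⟩
              fun j => ((a v e j : ℝ) : Trop) + x (u v e j))
            + (Finset.univ.sup' ⟨⟨0, hL v e⟩, Finset.mem_univ _⟩
              fun l => ((b v e l : ℝ) : Trop) + x (w v e l))))) :
    ∃ m : ℕ, 1 ≤ m ∧ ∃ Q : Fin n → MetzlerData m,
      {x : Fin n → Trop | ∀ v, x v ≤ F x v} =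
        metzlerSpectrahedron (botMetzler m) Q := by
  have : Nonempty (Σ v, Fin (E v)) := ⟨⟨⟨0, hn⟩, ⟨0, hE _⟩⟩⟩
  obtain ⟨m, hm, Q, hQ⟩ := exists_metzlerSpectrahedron_eq_setOf_add_self_le
    (fun t : Σ v, Fin (E v) =>
      tropFormCoeff (fun _ : Unit => ((-r t.1 t.2 : ℝ) : Trop)) fun _ => t.1)
    (fun t => tropFormCoeff (fun j => (a t.1 t.2 j : Trop)) (u t.1 t.2))
    (fun t => tropFormCoeff (fun l => (b t.1 t.2 l : Trop)) (w t.1 t.2))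
  refine ⟨m, hm, Q, Eq.trans (Set.ext fun x => ?_) hQ⟩
  simp only [Set.mem_ofPred_eq, hF, Sigma.forall]
  refine forall_congr' fun v => (Finset.le_inf'_iff _ _).trans (forall_congr' fun e => ?_)
  -- `erw`: the nonemptiness proofs in `hF` are anonymous constructors, which have type
  -- `Finset.Nonempty univ` only after unfolding it.
  erw [Finset.sup'_eq_sup, Finset.sup'_eq_sup]
  simp only [mem_univ, true_implies, le_map_add_half_iff, tropAff_bot_tropFormCoeff,
    univ_unique, sup_singleton]
end

section
/- Let F : ℝⁿ → ℝⁿ be semilinear, monotone, and additively homogeneous. Then there exist p ≥ 1, rational stochastic matrices A⁽¹⁾, …, A⁽ᵖ⁾ ∈ ℚ^{n×n}, vectors b⁽¹⁾, …, b⁽ᵖ⁾ ∈ ℝⁿ, and, for every k ∈ [n], an integer M_k ≥ 1 and nonempty subsets S_{k1}, …, S_{kM_k} ⊆ [p], such that for all x ∈ ℝⁿ and all k ∈ [n]: F_k(x) = min_{i ∈ [M_k]} max_{s ∈ S_{ki}} ( ⟨A⁽ˢ⁾_k, x⟩ + b⁽ˢ⁾_k ), where A⁽ˢ⁾_k denotes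 the k-th row of A⁽ˢ⁾. -/
open Finset

/-!
Cut `ℝⁿ` along the finitely many basic semilinear pieces of the graph of `F`. On each piece the
rational equality constraints determine `F x` as a rational affine function of `x`: a kernel
vector of their `y`-part would let one move vertically inside the piece, hence inside the graph.
The pieces are convex, so by Baire's theorem those with nonempty interior have closures covering
`ℝⁿ`, and on them monotonicity and additive homogeneity force the linear part to be stochastic.
Finally, following the segment from `x` to `y` through the closed convex pieces produces a piece
`s` with `F_s x ≤ F x` and `F y ≤ F_s y`. This is exactly what makes `F_k` the minimum, over the
sets `S_z = {s | F_{s,k} z ≤ F_k z}`, of the maximum of the affine functions indexed by `S_z`.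
-/

open Set Filter Topology

theorem AffineMap.le_of_lt_of_le_of_le {f g : ℝ →ᵃ[ℝ] ℝ} {a τ t : ℝ} (haτ : a ≤ τ)
    (hτt : τ ≤ t) (ha : g a < f a) (hτ : f τ ≤ g τ) : f t ≤ g t := by
  have affine : ∀ (h : ℝ →ᵃ[ℝ] ℝ) x, h x = h 0 + x * (h 1 - h 0) := fun h x => by
    have := h.apply_lineMap 0 1 x
    simp only [AffineMap.lineMap_apply_ring', sub_zero, mul_one, add_zero] at this
    linarith
  rw [affine f, affine g] at *
  have hslope : f 1 - f 0 < g 1 - g 0 := by nlinarith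
  nlinarith [mul_nonneg (sub_nonneg.2 hτt) (sub_nonneg.2 hslope.le)]

section ClosedConvexCover

variable {ι : Type*} [Finite ι]

theorem exists_Icc_subset_of_closed_convex_cover {I : ι → Set ℝ} (hc : ∀ u, IsClosed (I u))
    (hv : ∀ u, Convex ℝ (I u)) (hcov : ⋃ u, I u = univ) (τ : ℝ) :
    ∃ u, ∃ τ' > τ, Icc τ τ' ⊆ I u := by
  obtain ⟨u, hu⟩ : ∃ u, ∃ᶠ t in 𝓝[>] τ, t ∈ I u := by
    by_contra! h
    obtain ⟨t, ht⟩ := (eventually_all.2 h).exists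
    obtain ⟨u, hu⟩ := iUnion_eq_univ_iff.1 hcov t
    exact ht u hu
  have hτ : τ ∈ I u :=
    (hc u).closure_subset (mem_closure_iff_frequently.2 (hu.filter_mono nhdsWithin_le_nhds))
  obtain ⟨τ', hτ'I, hτ'⟩ := (hu.and_eventually self_mem_nhdsWithin).exists
  exact ⟨u, τ', hτ', (hv u).ordConnected.out hτ hτ'I⟩

theorem exists_affine_le_ge_of_closed_convex_cover_real {φ : ℝ → ℝ} (hφ : Continuous φ)
    {I : ι → Set ℝ} (hc : ∀ u, IsClosed (I u)) (hv : ∀ u, Convex ℝ (I u))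
    (hcov : ⋃ u, I u = univ) (h : ι → ℝ →ᵃ[ℝ] ℝ) (hφh : ∀ u, EqOn φ (h u) (I u))
    {a b : ℝ} (hab : a ≤ b) : ∃ u, h u a ≤ φ a ∧ φ b ≤ h u b := by
  let s := {τ | ∃ u, h u a ≤ φ a ∧ φ τ ≤ h u τ}
  have hs : IsClosed s := by
    simp only [s, ofPred_exists]
    refine isClosed_iUnion_of_finite fun u => ?_
    by_cases hu : h u a ≤ φ a
    · simpa [hu] using isClosed_le hφ (h u).continuous_of_finiteDimensional
    · simp [hu]
  have has : a ∈ s := by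
    obtain ⟨u, hu⟩ := iUnion_eq_univ_iff.1 hcov a
    exact ⟨u, (hφh u hu).ge, (hφh u hu).le⟩
  refine (hs.inter isClosed_Icc).Icc_subset_of_forall_mem_nhdsWithin has ?_ ⟨hab, le_rfl⟩
  rintro τ ⟨⟨u, hua, hτu⟩, haτ, -⟩
  obtain ⟨u', τ', hτ', hI⟩ := exists_Icc_subset_of_closed_convex_cover hc hv hcov τ
  refine mem_of_superset (Icc_mem_nhdsGT hτ') fun t ht => ?_
  have hφt : φ t = h u' t := hφh u' (hI ht)
  by_cases hu' : h u' a ≤ φ a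
  · exact ⟨u', hu', hφt.le⟩
  · -- `h u'` starts above `h u` at `a` but is below it at `τ`, hence stays below it after `τ`
    refine ⟨u, hua, hφt ▸ AffineMap.le_of_lt_of_le_of_le haτ ht.1 ?_ ?_⟩
    · linarith
    · rw [← hφh u' (hI (left_mem_Icc.2 hτ'.le))]
      exact hτu

theorem exists_affine_le_ge_of_closed_convex_cover {E : Type*} [AddCommGroup E] [Module ℝ E]
    [TopologicalSpace E] [IsTopologicalAddGroup E] [ContinuousSMul ℝ E] {f : E → ℝ}
    (hf : Continuous f) {W : ι → Set E} (hc : ∀ u, IsClosed (W u)) (hv : ∀ u, Convex ℝ (W u))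
    (hcov : ⋃ u, W u = univ) (g : ι → E →ᵃ[ℝ] ℝ) (hfg : ∀ u, EqOn f (g u) (W u)) (x y : E) :
    ∃ u, g u x ≤ f x ∧ f y ≤ g u y := by
  let γ : ℝ →ᵃ[ℝ] E := AffineMap.lineMap x y
  have hγ : Continuous γ := AffineMap.lineMap_continuous
  simpa [γ] using exists_affine_le_ge_of_closed_convex_cover_real (hf.comp hγ)
    (fun u => (hc u).preimage hγ) (fun u => (hv u).affine_preimage γ)
    (by rw [← preimage_iUnion, hcov, preimage_univ]) (fun u => (g u).comp γ)
    (fun u _ hτ => hfg u hτ) zero_le_one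

end ClosedConvexCover

theorem exists_inf'_sup'_eq_of_forall_exists_le_ge {E ι : Type*} [Nonempty E] [Fintype ι]
    {f : E → ℝ} (g : ι → E → ℝ) (h : ∀ x y, ∃ u, g u x ≤ f x ∧ f y ≤ g u y) :
    ∃ (M : ℕ) (hM : 0 < M) (S : Fin M → Finset ι) (hS : ∀ i, (S i).Nonempty), ∀ x,
      f x = Finset.univ.inf' ⟨⟨0, hM⟩, Finset.mem_univ _⟩
        fun i => (S i).sup' (hS i) fun u => g u x := by
  classical
  let T : E → Finset ι := fun z => {u | g u z ≤ f z}
  let 𝒞 : Finset (Finset ι) := {S | S.Nonempty ∧ ∀ x, ∃ u ∈ S, f x ≤ g u x}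
  have hT : ∀ z, T z ∈ 𝒞 := fun z => by
    have hTz : ∀ x, ∃ u ∈ T z, f x ≤ g u x := fun x =>
      (h z x).imp fun u hu => ⟨by simpa [T] using hu.1, hu.2⟩
    obtain ⟨u, hu, -⟩ := hTz z
    exact Finset.mem_filter.2 ⟨Finset.mem_univ _, ⟨u, hu⟩, hTz⟩
  have h𝒞 : ∀ S ∈ 𝒞, S.Nonempty ∧ ∀ x, ∃ u ∈ S, f x ≤ g u x := fun S hS =>
    (Finset.mem_filter.1 hS).2
  let S : Fin 𝒞.card → Finset ι := fun i => 𝒞.equivFin.symm i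
  refine ⟨𝒞.card, Finset.card_pos.2 ⟨_, hT (Classical.arbitrary E)⟩, S,
    fun i => (h𝒞 _ (𝒞.equivFin.symm i).2).1, fun x => le_antisymm ?_ ?_⟩
  · refine Finset.le_inf' _ _ fun i _ => ?_
    obtain ⟨u, hu, hfu⟩ := (h𝒞 _ (𝒞.equivFin.symm i).2).2 x
    exact hfu.trans (Finset.le_sup' (fun u => g u x) hu)
  · refine Finset.inf'_le_of_le _ (Finset.mem_univ (𝒞.equivFin ⟨T x, hT x⟩)) ?_
    refine Finset.sup'_le _ _ fun u hu => ?_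
    simpa [S, T] using hu

section MonotoneAddHomog

open Matrix

variable {n : ℕ} {F : (Fin n → ℝ) → Fin n → ℝ}

theorem AddHomog.lipschitzWith_apply (hhom : AddHomog F) (hmono : Monotone F) (k : Fin n) :
    LipschitzWith 1 fun x => F x k := by
  refine LipschitzWith.of_le_add fun x y => ?_
  have hle : x ≤ fun l => dist x y + y l := fun l => by
    have := (Real.dist_eq (x l) (y l)) ▸ dist_le_pi_dist x y l
    linarith [le_abs_self (x l - y l)]
  have := hmono hle k
  rw [hhom] at this
  linarith

theorem AddHomog.mem_rowStochastic_of_eqOn (hhom : AddHomog F) (hmono : Monotone F)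
    {U : Set (Fin n → ℝ)} (hU : IsOpen U) (hne : U.Nonempty) {M : Matrix (Fin n) (Fin n) ℝ}
    {c : Fin n → ℝ} (hF : ∀ x ∈ U, F x = M *ᵥ x + c) : M ∈ rowStochastic ℝ (Fin n) := by
  obtain ⟨x₀, hx₀⟩ := hne
  have step : ∀ v, ∃ t : ℝ, 0 < t ∧ F (x₀ + t • v) = F x₀ + t • (M *ᵥ v) := fun v => by
    have hlim : Tendsto (fun t : ℝ => x₀ + t • v) (𝓝[>] 0) (𝓝 x₀) := by
      have hcont : Continuous fun t : ℝ => x₀ + t • v := by fun_prop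
      exact (hcont.tendsto' 0 x₀ (by simp)).mono_left nhdsWithin_le_nhds
    obtain ⟨t, htU, ht⟩ :=
      ((hlim.eventually (hU.mem_nhds hx₀)).and self_mem_nhdsWithin).exists
    refine ⟨t, ht, ?_⟩
    rw [hF _ htU, hF _ hx₀, mulVec_add, mulVec_smul]
    abel
  refine mem_rowStochastic.2 ⟨fun k l => ?_, ?_⟩
  · obtain ⟨t, ht, hFt⟩ := step (Pi.single l 1)
    have hle : x₀ ≤ x₀ + t • Pi.single l 1 :=
      le_add_of_nonneg_right (smul_nonneg ht.le (Pi.single_nonneg.2 zero_le_one))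
    have := hmono hle k
    rw [hFt] at this
    simp only [mulVec_single_one, col_apply, Pi.add_apply, Pi.smul_apply, smul_eq_mul] at this
    exact (mul_nonneg_iff_of_pos_left ht).1 (by linarith)
  · obtain ⟨t, ht, hFt⟩ := step 1
    have hshift : x₀ + t • 1 = fun i => t + x₀ i := by ext; simp [add_comm]
    rw [hshift, hhom] at hFt
    refine smul_right_injective _ ht.ne' (funext fun k => ?_)
    have := congrFun hFt k
    simp only [Pi.add_apply, Pi.smul_apply, smul_eq_mul, Pi.one_apply, mul_one] at this ⊢
    linarith

end MonotoneAddHomog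

theorem Matrix.mem_rowStochastic_of_map_ratCast {ι : Type*} [Fintype ι] [DecidableEq ι]
    {A : Matrix ι ι ℚ} (hA : A.map (Rat.cast : ℚ → ℝ) ∈ rowStochastic ℝ ι) :
    A ∈ rowStochastic ℚ ι := by
  rw [mem_rowStochastic_iff_sum] at hA ⊢
  simp only [map_apply] at hA
  exact ⟨fun i j => by exact_mod_cast hA.1 i j, fun i => by exact_mod_cast hA.2 i⟩

section ConvexCover

variable {E : Type*} [NormedAddCommGroup E] [NormedSpace ℝ E] [FiniteDimensional ℝ E]

theorem Convex.interior_closure_eq_interior {s : Set E} (hs : Convex ℝ s) :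
    interior (closure s) = interior s := by
  rcases (interior s).eq_empty_or_nonempty with h | h
  · rw [h, ← Set.not_nonempty_iff_eq_empty,
      hs.closure.interior_nonempty_iff_affineSpan_eq_top]
    rw [← Set.not_nonempty_iff_eq_empty, hs.interior_nonempty_iff_affineSpan_eq_top] at h
    refine fun htop => h (eq_top_iff.2 (htop.ge.trans (affineSpan_le.2 ?_)))
    exact (AffineSubspace.closed_of_finiteDimensional _).closure_subset_iff.2
      (subset_affineSpan ℝ s)
  · exact hs.interior_closure_eq_interior_of_nonempty_interior h

theorem iUnion_closure_interior_eq_univ_of_convex {ι : Type*} [Finite ι] {P : ι → Set E}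
    (hP : ∀ i, Convex ℝ (P i)) (hcov : ⋃ i, P i = univ) :
    ⋃ i, closure (interior (P i)) = univ := by
  have hdense : Dense (⋃ i, interior (closure (P i))) :=
    dense_iUnion_interior_of_closed (fun i => isClosed_closure)
      (eq_univ_of_univ_subset (hcov ▸ iUnion_mono fun i => subset_closure))
  simp only [fun i => (hP i).interior_closure_eq_interior] at hdense
  rw [← closure_iUnion_of_finite, hdense.closure_eq]

end ConvexCover

section Semilinear

open Matrix

theorem Matrix.mulVec_append {ι R : Type*} [NonUnitalNonAssocSemiring R] {n m : ℕ}
    (M : Matrix ι (Fin (n + m)) R) (x : Fin n → R) (y : Fin m → R) :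
    M *ᵥ Fin.append x y =
      M.submatrix id (Fin.castAdd m) *ᵥ x + M.submatrix id (Fin.natAdd n) *ᵥ y := by
  ext i
  simp [mulVec, dotProduct, Fin.sum_univ_add]

theorem Matrix.exists_mul_eq_one_of_injective {K κ ι : Type*} [Field K] [Fintype κ] [Fintype ι]
    [DecidableEq ι] {M : Matrix κ ι K} (hM : Function.Injective M.mulVec) :
    ∃ D : Matrix ι κ K, D * M = 1 := by
  classical
  obtain ⟨g, hg⟩ := (toLin' M).exists_leftInverse_of_injective (LinearMap.ker_eq_bot.2 hM)
  refine ⟨LinearMap.toMatrix' g, ?_⟩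
  rw [← LinearMap.toMatrix'_toLin' M, ← LinearMap.toMatrix'_comp, hg, LinearMap.toMatrix'_id]

theorem Fin.append_inj {α : Type*} {n m : ℕ} {x x' : Fin n → α} {y y' : Fin m → α} :
    Fin.append x y = Fin.append x' y' ↔ x = x' ∧ y = y' := by
  refine ⟨fun h => ⟨funext fun i => ?_, funext fun i => ?_⟩, fun h => by rw [h.1, h.2]⟩
  · simpa using congrFun h (Fin.castAdd m i)
  · simpa using congrFun h (Fin.natAdd n i)

theorem Matrix.map_ratCast_mul {κ ι ο : Type*} [Fintype ι] (X : Matrix κ ι ℚ)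
    (Y : Matrix ι ο ℚ) :
    (X * Y).map (Rat.cast : ℚ → ℝ) = X.map (Rat.cast : ℚ → ℝ) * Y.map (Rat.cast : ℚ → ℝ) :=
  Matrix.map_mul (f := Rat.castHom ℝ)

def basicSemilinearSet {d p q : ℕ} (A : Matrix (Fin p) (Fin d) ℚ) (b : Fin p → ℝ)
    (C : Matrix (Fin q) (Fin d) ℚ) (c : Fin q → ℝ) : Set (Fin d → ℝ) :=
  {x | (∀ i, b i < (A.map (↑) *ᵥ x) i) ∧ C.map (↑) *ᵥ x = c}

variable {d : ℕ}

theorem basicSemilinear_iff {S : Set (Fin d → ℝ)} :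
    BasicSemilinear S ↔ ∃ (p q : ℕ) (A : Matrix (Fin p) (Fin d) ℚ) (b : Fin p → ℝ)
      (C : Matrix (Fin q) (Fin d) ℚ) (c : Fin q → ℝ), S = basicSemilinearSet A b C c := by
  simp only [BasicSemilinear, basicSemilinearSet, funext_iff]
  rfl

theorem BasicSemilinear.convex {S : Set (Fin d → ℝ)} (hS : BasicSemilinear S) : Convex ℝ S := by
  obtain ⟨p, q, A, b, C, c, rfl⟩ := basicSemilinear_iff.1 hS
  have : basicSemilinearSet A b C c = (A.map (↑)).mulVecLin ⁻¹' (univ.pi fun i => Ioi (b i)) ∩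
      (C.map (↑)).mulVecLin ⁻¹' {c} := by
    ext x
    simp [basicSemilinearSet]
  rw [this]
  exact ((convex_pi fun i _ => convex_Ioi _).linear_preimage _).inter
    ((convex_singleton c).linear_preimage _)

theorem eventually_add_smul_mem_basicSemilinearSet {p q : ℕ} {A : Matrix (Fin p) (Fin d) ℚ}
    {b : Fin p → ℝ} {C : Matrix (Fin q) (Fin d) ℚ} {c : Fin q → ℝ} {z w : Fin d → ℝ}
    (hz : z ∈ basicSemilinearSet A b C c) (hw : C.map (↑) *ᵥ w = 0) :
    ∀ᶠ t in 𝓝 (0 : ℝ), z + t • w ∈ basicSemilinearSet A b C c := by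
  have hopen : IsOpen {x : Fin d → ℝ | ∀ i, b i < (A.map (↑) *ᵥ x) i} := by
    simp only [ofPred_forall]
    exact isOpen_iInter_of_finite fun i => isOpen_lt continuous_const
      ((continuous_apply i).comp (continuous_const.matrix_mulVec continuous_id))
  have hcont : Continuous fun t : ℝ => z + t • w := by fun_prop
  filter_upwards [(hcont.tendsto' 0 z (by simp)).eventually (hopen.mem_nhds hz.1)] with t ht
  exact ⟨ht, by rw [mulVec_add, mulVec_smul, hw, hz.2, smul_zero, add_zero]⟩

variable {n m : ℕ} {F : (Fin n → ℝ) → Fin m → ℝ}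

theorem convex_setOf_append_mem {B : Set (Fin (n + m) → ℝ)} (hB : Convex ℝ B)
    (hBF : B ⊆ range fun x => Fin.append x (F x)) :
    Convex ℝ {x | Fin.append x (F x) ∈ B} := by
  let π : (Fin (n + m) → ℝ) →ₗ[ℝ] Fin n → ℝ := LinearMap.funLeft ℝ ℝ (Fin.castAdd m)
  have : {x | Fin.append x (F x) ∈ B} = π '' B := by
    ext x
    refine ⟨fun hx => ⟨_, hx, by ext; simp [π, LinearMap.funLeft]⟩, ?_⟩
    rintro ⟨z, hz, rfl⟩
    obtain ⟨y, rfl⟩ := hBF hz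
    have : π (Fin.append y (F y)) = y := by ext; simp [π, LinearMap.funLeft]
    simpa [this] using hz
  rw [this]
  exact hB.linear_image π

-- Moving along a kernel vector of the `y`-part of the equality constraints stays inside the
-- piece, hence inside the graph, which is only possible if the vector vanishes.
theorem injective_mulVec_natAdd_of_subset_graph {p q : ℕ} {A : Matrix (Fin p) (Fin (n + m)) ℚ}
    {b : Fin p → ℝ} {C : Matrix (Fin q) (Fin (n + m)) ℚ} {c : Fin q → ℝ}
    (hne : (basicSemilinearSet A b C c).Nonempty)
    (hBF : basicSemilinearSet A b C c ⊆ range fun x => Fin.append x (F x)) :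
    Function.Injective (C.submatrix id (Fin.natAdd n)).mulVec := by
  obtain ⟨z₀, hz₀⟩ := hne
  set Cy := C.submatrix id (Fin.natAdd n)
  refine (injective_iff_map_eq_zero Cy.mulVecLin).2 fun v hv => ?_
  let w : Fin (n + m) → ℝ := Fin.append 0 fun l => (v l : ℝ)
  have hw : C.map (↑) *ᵥ w = 0 := by
    ext i
    have h := RingHom.map_mulVec (Rat.castHom ℝ) Cy v i
    simp only [show Cy *ᵥ v = 0 from hv, Pi.zero_apply, map_zero] at h
    simpa [w, mulVec_append, Cy, Function.comp_def, submatrix_map] using h.symm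
  obtain ⟨t, hzt, ht⟩ := (((eventually_add_smul_mem_basicSemilinearSet hz₀ hw).filter_mono
    nhdsWithin_le_nhds).and (self_mem_nhdsWithin : {0}ᶜ ∈ 𝓝[≠] (0 : ℝ))).exists
  obtain ⟨x₀, hx₀⟩ := hBF hz₀
  obtain ⟨x₁, hx₁⟩ := hBF hzt
  have hsplit : z₀ + t • w = Fin.append x₀ (F x₀ + t • fun l => (v l : ℝ)) := by
    ext j
    refine Fin.addCases (fun l => ?_) (fun l => ?_) j <;> simp [← hx₀, w]
  rw [hsplit] at hx₁
  obtain ⟨rfl, hF⟩ := Fin.append_inj.1 hx₁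
  have hvt : t • (fun l => (v l : ℝ)) = 0 := by simpa using hF.symm
  ext l
  simpa using congrFun ((smul_eq_zero.1 hvt).resolve_left ht) l

theorem exists_rat_affine_of_subset_graph {B : Set (Fin (n + m) → ℝ)} (hB : BasicSemilinear B)
    (hBF : B ⊆ range fun x => Fin.append x (F x)) :
    ∃ (L : Matrix (Fin m) (Fin n) ℚ) (e : Fin m → ℝ),
      ∀ x, Fin.append x (F x) ∈ B → F x = L.map (↑) *ᵥ x + e := by
  obtain ⟨p, q, A, b, C, c, rfl⟩ := basicSemilinear_iff.1 hB
  rcases (basicSemilinearSet A b C c).eq_empty_or_nonempty with hempty | ⟨z₀, hz₀⟩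
  · exact ⟨0, 0, fun x hx => by simp [hempty] at hx⟩
  set Cx := C.submatrix id (Fin.castAdd m)
  set Cy := C.submatrix id (Fin.natAdd n)
  have hinj : Function.Injective Cy.mulVec :=
    injective_mulVec_natAdd_of_subset_graph ⟨z₀, hz₀⟩ hBF
  obtain ⟨D, hD⟩ := exists_mul_eq_one_of_injective hinj
  refine ⟨-(D * Cx), D.map (↑) *ᵥ c, fun x hx => ?_⟩
  set Dℝ : Matrix (Fin m) (Fin q) ℝ := D.map (↑)
  set Cxℝ : Matrix (Fin q) (Fin n) ℝ := Cx.map (↑)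
  set Cyℝ : Matrix (Fin q) (Fin m) ℝ := Cy.map (↑)
  have hxeq : Cxℝ *ᵥ x + Cyℝ *ᵥ F x = c := by
    simpa [mulVec_append, submatrix_map] using hx.2
  have hDℝ : Dℝ * Cyℝ = 1 := by
    rw [← map_ratCast_mul, hD, Matrix.map_one _ Rat.cast_zero Rat.cast_one]
  calc F x = (Dℝ * Cyℝ) *ᵥ F x := by rw [hDℝ, one_mulVec]
    _ = Dℝ *ᵥ (c - Cxℝ *ᵥ x) := by rw [← mulVec_mulVec, ← hxeq, add_sub_cancel_left]
    _ = (-(D * Cx)).map (↑) *ᵥ x + Dℝ *ᵥ c := by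
      rw [mulVec_sub, mulVec_mulVec, Matrix.map_neg _ Rat.cast_neg, map_ratCast_mul,
        neg_mulVec]
      abel

theorem SemilinearFun.exists_convex_pieces (hF : SemilinearFun F) :
    ∃ (N : ℕ) (P : Fin N → Set (Fin n → ℝ)) (L : Fin N → Matrix (Fin m) (Fin n) ℚ)
      (e : Fin N → Fin m → ℝ), (∀ i, Convex ℝ (P i)) ∧ ⋃ i, P i = univ ∧
        ∀ i, ∀ x ∈ P i, F x = (L i).map (↑) *ᵥ x + e i := by
  obtain ⟨N, B, hB, hgraph⟩ := hF
  have hBF : ∀ i, B i ⊆ range fun x => Fin.append x (F x) := fun i =>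
    hgraph ▸ subset_iUnion B i
  choose L e hLe using fun i => exists_rat_affine_of_subset_graph (hB i) (hBF i)
  refine ⟨N, fun i => {x | Fin.append x (F x) ∈ B i}, L, e,
    fun i => convex_setOf_append_mem (hB i).convex (hBF i), ?_, hLe⟩
  refine Set.eq_univ_of_forall fun x => ?_
  have hx : Fin.append x (F x) ∈ ⋃ i, B i := hgraph ▸ mem_range_self x
  obtain ⟨i, hi⟩ := mem_iUnion.1 hx
  exact mem_iUnion.2 ⟨i, hi⟩

theorem SemilinearFun.exists_open_pieces (hF : SemilinearFun F) :
    ∃ (p : ℕ) (A : Fin p → Matrix (Fin m) (Fin n) ℚ) (b : Fin p → Fin m → ℝ)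
      (U : Fin p → Set (Fin n → ℝ)), (∀ s, IsOpen (U s)) ∧ (∀ s, (U s).Nonempty) ∧
        (∀ s, Convex ℝ (U s)) ∧ ⋃ s, closure (U s) = univ ∧
        ∀ s, ∀ x ∈ U s, F x = (A s).map (↑) *ᵥ x + b s := by
  classical
  obtain ⟨N, P, L, e, hPc, hPcov, hPF⟩ := hF.exists_convex_pieces
  let σ := (Fintype.equivFin {i // (interior (P i)).Nonempty}).symm
  refine ⟨_, fun s => L (σ s), fun s => e (σ s), fun s => interior (P (σ s)),
    fun s => isOpen_interior, fun s => (σ s).2, fun s => (hPc _).interior, ?_,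
    fun s x hx => hPF _ x (interior_subset hx)⟩
  refine eq_univ_of_univ_subset
    ((iUnion_closure_interior_eq_univ_of_convex hPc hPcov).ge.trans (iUnion_subset fun i => ?_))
  rcases (interior (P i)).eq_empty_or_nonempty with h | h
  · simp [h]
  · exact subset_iUnion_of_subset (σ.symm ⟨i, h⟩) (by simp)

end Semilinear

theorem stmt12 {n : ℕ} (F : (Fin n → ℝ) → Fin n → ℝ)
    (hsl : SemilinearFun F) (hmono : Monotone F) (hhom : AddHomog F) :
    ∃ (p : ℕ) (_ : 0 < p) (A : Fin p → Fin n → Fin n → ℚ) (b : Fin p → Fin n → ℝ),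
      (∀ s k l, 0 ≤ A s k l) ∧ (∀ s k, ∑ l, A s k l = 1) ∧
      ∃ (M : Fin n → ℕ) (hM : ∀ k, 0 < M k)
        (Ss : ∀ k : Fin n, Fin (M k) → Finset (Fin p))
        (hS : ∀ k i, (Ss k i).Nonempty),
        ∀ x k, F x k =
          Finset.univ.inf' ⟨⟨0, hM k⟩, Finset.mem_univ _⟩ (fun i =>
            (Ss k i).sup' (hS k i)
              (fun s => (∑ l, (A s k l : ℝ) * x l) + b s k)) := by
  obtain ⟨p, A, b, U, hUo, hUne, hUc, hcov, hFU⟩ := hsl.exists_open_pieces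
  have hp : 0 < p := Nat.pos_of_ne_zero (by rintro rfl; simpa using hcov.symm)
  have hstoch : ∀ s, A s ∈ Matrix.rowStochastic ℚ (Fin n) := fun s =>
    Matrix.mem_rowStochastic_of_map_ratCast
      (hhom.mem_rowStochastic_of_eqOn hmono (hUo s) (hUne s) (hFU s))
  let g : Fin n → Fin p → (Fin n → ℝ) →ᵃ[ℝ] ℝ := fun k s =>
    (LinearMap.proj k ∘ₗ ((A s).map (Rat.cast : ℚ → ℝ)).mulVecLin).toAffineMap +
      AffineMap.const ℝ _ (b s k)
  have hg : ∀ k s x, g k s x = ∑ l, (A s k l : ℝ) * x l + b s k := fun _ _ _ => rfl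
  have hcont : ∀ k, Continuous fun x => F x k := fun k =>
    (hhom.lipschitzWith_apply hmono k).continuous
  have hFg : ∀ k s, EqOn (fun x => F x k) (g k s) (closure (U s)) := fun k s =>
    EqOn.closure (fun x hx => by rw [hg, hFU s x hx]; rfl) (hcont k)
      (g k s).continuous_of_finiteDimensional
  choose M hM Ss hS hrepr using fun k => exists_inf'_sup'_eq_of_forall_exists_le_ge
    (fun s x => g k s x) (exists_affine_le_ge_of_closed_convex_cover (hcont k)
      (fun s => isClosed_closure) (fun s => (hUc s).closure) hcov (g k) (hFg k))
  exact ⟨p, hp, A, b, fun s => (Matrix.mem_rowStochastic_iff_sum.1 (hstoch s)).1,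
    fun s => (Matrix.mem_rowStochastic_iff_sum.1 (hstoch s)).2, M, hM, Ss, hS,
    fun x k => hrepr k x⟩
end

section
/- (Tropical Carathéodory theorem.) For every set X ⊆ 𝕋ⁿ, tconv(X) = { z ∈ 𝕋ⁿ : there exist points x⁽¹⁾, …, x⁽ⁿ⁺¹⁾ ∈ X and scalars λ₁, …, λ_{n+1} ∈ 𝕋 with max_{1≤k≤n+1} λ_k = 0 such that z_i = max_{1≤k≤n+1} ( λ_k + x⁽ᵏ⁾_i ) for all i ∈ [n] }. -/
open Finset

/-!
The tropical convex combinations of `n + 1` points of `X` contain `X` and lie in every tropically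
convex set containing `X`: induct on the number of points, rescaling the weights of all but the
first point so that their maximum is `0`. They also form a tropically convex set. Indeed, a
tropical convex combination of two of them is one of `2(n + 1)` points of `X`, and a combination
of any finite family can be rewritten with only `n + 1` of its points: one of weight `0`, and for
each coordinate `i` one attaining the maximum in coordinate `i`.
-/

variable {ι κ κ' : Type*}

lemma Trop.add_finset_sup_s17 (a : Trop) (s : Finset κ) (f : κ → Trop) :
    a + s.sup f = s.sup fun k => a + f k :=
  apply_sup_eq_sup_comp_of_linearOrder (a + ·) (fun _ _ h => add_le_add_right h a)
    (WithBot.add_bot a)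

lemma Fin.sup_univ_succ {α : Type*} [SemilatticeSup α] [OrderBot α] {N : ℕ}
    (f : Fin (N + 1) → α) : univ.sup f = f 0 ⊔ univ.sup (Fin.tail f) := by
  rw [Fin.univ_succ, sup_cons, sup_map]
  rfl

noncomputable def tropComb [Fintype κ] (l : κ → Trop) (x : κ → ι → Trop) : ι → Trop :=
  fun i => univ.sup fun k => l k + x k i

def tropCombs (X : Set (ι → Trop)) (κ : Type*) [Fintype κ] : Set (ι → Trop) :=
  {z | ∃ (x : κ → ι → Trop) (l : κ → Trop),
    (∀ k, x k ∈ X) ∧ univ.sup l = 0 ∧ ∀ i, z i = tropComb l x i}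

lemma add_tropComb [Fintype κ] (c : Trop) (l : κ → Trop) (x : κ → ι → Trop) (i : ι) :
    c + tropComb l x i = tropComb (fun k => c + l k) x i := by
  simp only [tropComb, Trop.add_finset_sup_s17, add_assoc]

lemma tropComb_sumElim [Fintype κ] [Fintype κ'] (l : κ → Trop) (m : κ' → Trop)
    (x : κ → ι → Trop) (y : κ' → ι → Trop) (i : ι) :
    tropComb (Sum.elim l m) (Sum.elim x y) i = tropComb l x i ⊔ tropComb m y i := by
  simp only [tropComb, ← univ_disjSum_univ, sup_disjSum, Sum.elim_inl, Sum.elim_inr]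

lemma tropComb_fin_succ {N : ℕ} (l : Fin (N + 1) → Trop) (x : Fin (N + 1) → ι → Trop)
    (i : ι) : tropComb l x i = (l 0 + x 0 i) ⊔ tropComb (Fin.tail l) (Fin.tail x) i :=
  Fin.sup_univ_succ _

lemma subset_tropCombs [Fintype κ] [Nonempty κ] (X : Set (ι → Trop)) : X ⊆ tropCombs X κ :=
  fun z hz => ⟨fun _ => z, fun _ => 0, fun _ => hz, sup_const univ_nonempty 0,
    fun i => by simp [tropComb, sup_const univ_nonempty]⟩

lemma tropCombs_sum [Fintype κ] [Fintype κ'] {X : Set (ι → Trop)} {u v : ι → Trop}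
    (hu : u ∈ tropCombs X κ) (hv : v ∈ tropCombs X κ') {a b : Trop} (hab : a ⊔ b = 0) :
    (fun i => (a + u i) ⊔ (b + v i)) ∈ tropCombs X (κ ⊕ κ') := by
  obtain ⟨x, l, hx, hl, hu⟩ := hu
  obtain ⟨y, m, hy, hm, hv⟩ := hv
  refine ⟨Sum.elim x y, Sum.elim (fun k => a + l k) (fun k => b + m k),
    fun k => k.rec hx hy, ?_, fun i => ?_⟩
  · rw [← univ_disjSum_univ, sup_disjSum]
    simp only [Sum.elim_inl, Sum.elim_inr, ← Trop.add_finset_sup_s17, hl, hm, add_zero, hab]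
  · show (a + u i) ⊔ (b + v i) = _
    rw [tropComb_sumElim, hu, hv, add_tropComb, add_tropComb]

theorem TropicallyConvex.tropCombs_fin_subset {n : ℕ} {X Y : Set (Fin n → Trop)}
    (hY : TropicallyConvex Y) (hXY : X ⊆ Y) : ∀ N : ℕ, tropCombs X (Fin (N + 1)) ⊆ Y
  | 0 => by
    rintro z ⟨x, l, hx, hl, hz⟩
    simp only [Fin.sup_univ_succ, univ_eq_empty, sup_empty, sup_bot_eq] at hl
    convert hXY (hx 0)
    funext i
    rw [hz, tropComb_fin_succ, hl, zero_add]
    exact sup_of_le_left bot_le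
  | N + 1 => by
    rintro z ⟨x, l, hx, hl, hz⟩
    rw [Fin.sup_univ_succ] at hl
    by_cases hs : univ.sup (Fin.tail l) = ⊥
    · have htail (i : Fin n) : tropComb (Fin.tail l) (Fin.tail x) i = ⊥ :=
        (Finset.sup_eq_bot_iff _ _).2 fun k _ => by
          rw [(Finset.sup_eq_bot_iff _ _).1 hs k (mem_univ k), WithBot.bot_add]
      rw [hs, sup_bot_eq] at hl
      convert hXY (hx 0)
      funext i
      rw [hz, tropComb_fin_succ, htail, sup_bot_eq, hl, zero_add]
    · obtain ⟨c, hc⟩ := WithBot.ne_bot_iff_exists.1 hs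
      have hw : tropComb (fun k => ((-c : ℝ) : Trop) + Fin.tail l k) (Fin.tail x) ∈ Y := by
        refine hY.tropCombs_fin_subset hXY N ⟨_, _, fun k => hx k.succ, ?_, fun _ => rfl⟩
        rw [← Trop.add_finset_sup_s17, ← hc, ← WithBot.coe_add, neg_add_cancel, WithBot.coe_zero]
      convert hY (x 0) (hXY (hx 0)) _ hw (l 0) c (hc ▸ hl) using 1
      funext i
      rw [hz, tropComb_fin_succ, add_tropComb]
      simp only [← add_assoc, ← WithBot.coe_add, add_neg_cancel, WithBot.coe_zero, zero_add]

theorem tropCombs_subset_tropCombs_fin {n : ℕ} [Fintype κ] (X : Set (Fin n → Trop)) :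
    tropCombs X κ ⊆ tropCombs X (Fin (n + 1)) := by
  rintro z ⟨x, l, hx, hl, hz⟩
  have hne : (univ : Finset κ).Nonempty := by
    by_contra h
    rw [not_nonempty_iff_eq_empty.1 h, sup_empty] at hl
    exact WithBot.bot_ne_zero hl
  obtain ⟨k0, -, hk0⟩ := exists_mem_eq_sup univ hne l
  choose kmax _ hkmax using fun i => exists_mem_eq_sup univ hne fun k => l k + x k i
  let g : Fin (n + 1) → κ := Fin.cons k0 kmax
  refine ⟨x ∘ g, l ∘ g, fun j => hx _, ?_, fun i => ?_⟩
  · refine le_antisymm (Finset.sup_le fun j _ => hl ▸ le_sup (f := l) (mem_univ _)) ?_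
    rw [← hl, hk0]
    exact le_sup (f := l ∘ g) (mem_univ 0)
  · rw [hz i]
    refine le_antisymm ?_
      (Finset.sup_le fun j _ => le_sup (f := fun k => l k + x k i) (mem_univ (g j)))
    rw [tropComb, hkmax i]
    exact le_sup (f := fun j => (l ∘ g) j + (x ∘ g) j i) (mem_univ i.succ)

theorem tropicallyConvex_tropCombs_fin {n : ℕ} (X : Set (Fin n → Trop)) :
    TropicallyConvex (tropCombs X (Fin (n + 1))) :=
  fun _ hu _ hv _ _ hab => tropCombs_subset_tropCombs_fin X (tropCombs_sum hu hv hab)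

theorem stmt17 {n : ℕ} (X : Set (Fin n → Trop)) :
    tconv X =
      {z | ∃ (x : Fin (n + 1) → Fin n → Trop) (l : Fin (n + 1) → Trop),
        (∀ k, x k ∈ X) ∧ Finset.univ.sup l = 0 ∧
        ∀ i, z i = Finset.univ.sup (fun k => l k + x k i)} := by
  change tconv X = tropCombs X (Fin (n + 1))
  refine subset_antisymm ?_ ?_
  · exact Set.sInter_subset_of_mem ⟨tropicallyConvex_tropCombs_fin X, subset_tropCombs X⟩
  · exact Set.subset_sInter fun Y ⟨hY, hXY⟩ => hY.tropCombs_fin_subset hXY n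
end
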